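/- arXiv:2011.10623 — 6 statements merged into one kernel-verified Lean document; each statement's English description precedes it below -/
import Mathlib

section
/- Let C be a configuration on a finite connected graph G = (V,E) and D a target distribution. If C solves D and supp(C) ∩ supp(D) = ∅, then pot(C) ≥ |D|. -/
/-- A single pebbling step: remove two pebbles from `u` and add one to an adjacent `v`. -/
def PebblingStep {V : Type} [DecidableEq V] (G : SimpleGraph V) (C C' : V → ℕ) : Prop :=
  ∃ u v : V, G.Adj u v ∧ 2 ≤ C u ∧
    C' = fun w => if w = u then C u - 2 else if w = v then C v + 1 else C w

/-- `C` solves the target distribution `D`: some sequence of pebbling steps reaches a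
configuration with at least `D v` pebbles on each vertex `v`. -/
def Solvable {V : Type} [DecidableEq V] (G : SimpleGraph V) (C D : V → ℕ) : Prop :=
  ∃ C' : V → ℕ, Relation.ReflTransGen (PebblingStep G) C C' ∧ ∀ v, D v ≤ C' v

/-- The distribution with `t` pebbles stacked on `r` and none elsewhere. -/
def stack {V : Type} [DecidableEq V] (r : V) (t : ℕ) : V → ℕ :=
  fun v => if v = r then t else 0

/-- The pebbling number of the demand `D` in `G`: the smallest `m` such that every
configuration of size `m` is `D`-solvable. -/
noncomputable def pebblingNumber {V : Type} [Fintype V] [DecidableEq V] (G : SimpleGraph V) (D : V → ℕ) : ℕ :=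
  sInf {m | ∀ C : V → ℕ, (∑ v, C v) = m → Solvable G C D}

/-- The `t`-fold pebbling number of `G`. -/
noncomputable def tPebblingNumber {V : Type} [Fintype V] [DecidableEq V]
    (G : SimpleGraph V) (t : ℕ) : ℕ :=
  Finset.univ.sup fun r => pebblingNumber G (stack r t)

/-- Reaching `C'` from `C` by exactly `k` pebbling steps. -/
inductive StepsN {V : Type} [DecidableEq V] (G : SimpleGraph V) : ℕ → (V → ℕ) → (V → ℕ) → Prop
  | refl (C : V → ℕ) : StepsN G 0 C C
  | tail {k : ℕ} {C C' C'' : V → ℕ} :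
      StepsN G k C C' → PebblingStep G C' C'' → StepsN G (k + 1) C C''

/-- `C` has an `r`-solution of cost at most `c` (cost = number of pebbling steps plus one). -/
def CheaplySolvable {V : Type} [DecidableEq V] (G : SimpleGraph V) (C : V → ℕ) (r : V) (c : ℕ) : Prop :=
  ∃ (k : ℕ) (C' : V → ℕ), StepsN G k C C' ∧ 1 ≤ C' r ∧ k + 1 ≤ c

/-- The eccentricity of a vertex: the maximum distance to any other vertex. -/
noncomputable def eccentricity {V : Type} [Fintype V] (G : SimpleGraph V) (r : V) : ℕ :=
  Finset.univ.sup fun v => G.dist r v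

/-- A vertex is simplicial if its neighborhood induces a complete graph. -/
def IsSimplicial {V : Type} (G : SimpleGraph V) (v : V) : Prop :=
  ∀ a b : V, G.Adj v a → G.Adj v b → a ≠ b → G.Adj a b

/-- A 2-path is either `K₂` or `K₃`, or a graph with exactly two simplicial vertices
`u` and `v` such that the neighborhood of `v` induces `K₂` and `G - v` is a 2-path. -/
inductive IsTwoPath : {V : Type} → SimpleGraph V → Prop
  | complete2 {V : Type} (G : SimpleGraph V) :
      Nat.card V = 2 → (∀ a b : V, a ≠ b → G.Adj a b) → IsTwoPath G
  | complete3 {V : Type} (G : SimpleGraph V) :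
      Nat.card V = 3 → (∀ a b : V, a ≠ b → G.Adj a b) → IsTwoPath G
  | extend {V : Type} (G : SimpleGraph V) (u v : V) :
      u ≠ v →
      {w : V | IsSimplicial G w} = {u, v} →
      (G.neighborSet v).ncard = 2 →
      IsSimplicial G v →
      IsTwoPath (G.induce {w : V | w ≠ v}) →
      IsTwoPath G

/-- The Kneser graph `K(m, h)`: vertices are the `h`-element subsets of `{1, …, m}`,
adjacent iff disjoint. -/
def kneserGraph (m h : ℕ) : SimpleGraph {s : Finset (Fin m) // s.card = h} :=
  SimpleGraph.fromRel fun a b => Disjoint a.1 b.1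

/-!
Weigh each pebble on a vertex of `supp D` by `1` and the pebbles elsewhere by `1/2`, rounded
down per vertex. A pebbling step never increases this weight: it spends two pebbles, worth at
least `1` (exactly `1` off `supp D`, by the rounding), to create one pebble worth at most `1`.
A configuration covering `D` weighs at least `|D|`, and since `C` vanishes on `supp D`, its
weight is `pot(C)`.
-/

section MixedPotential

variable {V : Type} [Fintype V]

def mixedPotential (S : V → Prop) [DecidablePred S] (C : V → ℕ) : ℕ :=
  ∑ w, if S w then C w else C w / 2

variable [DecidableEq V] {G : SimpleGraph V} (S : V → Prop) [DecidablePred S]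

lemma mixedPotential_le_of_pebblingStep {C C' : V → ℕ} (h : PebblingStep G C C') :
    mixedPotential S C' ≤ mixedPotential S C := by
  obtain ⟨u, v, hadj, hu, rfl⟩ := h
  -- `u` loses at least one unit of weight and `v` gains at most one.
  have hpoint : ∀ w,
      (if S w then (if w = u then C u - 2 else if w = v then C v + 1 else C w)
        else (if w = u then C u - 2 else if w = v then C v + 1 else C w) / 2)
        + (if w = u then 1 else 0)
      ≤ (if S w then C w else C w / 2) + (if w = v then 1 else 0) := by
    intro w
    by_cases hwu : w = u
    · subst hwu
      simp only [if_true, if_neg hadj.ne]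
      split_ifs <;> omega
    · by_cases hwv : w = v
      · subst hwv
        simp only [if_neg hwu, if_true]
        split_ifs <;> omega
      · simp only [if_neg hwu, if_neg hwv]
        omega
  have hsum := Finset.sum_le_sum fun w (_ : w ∈ Finset.univ) => hpoint w
  simp only [Finset.sum_add_distrib, Finset.sum_ite_eq', Finset.mem_univ, if_true] at hsum
  exact Nat.le_of_add_le_add_right hsum

lemma mixedPotential_le_of_reflTransGen {C C' : V → ℕ}
    (h : Relation.ReflTransGen (PebblingStep G) C C') :
    mixedPotential S C' ≤ mixedPotential S C := by
  induction h with
  | refl => exact le_rfl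
  | tail _ hstep ih => exact (mixedPotential_le_of_pebblingStep S hstep).trans ih

end MixedPotential

theorem potential_lemma_part2_general {V : Type} [Fintype V] [DecidableEq V]
    (G : SimpleGraph V) (C D : V → ℕ)
    (hsolve : Solvable G C D)
    (hdisj : Disjoint {v : V | 0 < C v} {v : V | 0 < D v}) :
    ∑ v, D v ≤ ∑ v, C v / 2 := by
  obtain ⟨C', hsteps, hcover⟩ := hsolve
  have hC : ∀ v, 0 < D v → C v = 0 := fun v hD =>
    Nat.eq_zero_of_not_pos fun hC => Set.disjoint_left.mp hdisj hC hD
  calc ∑ v, D v ≤ mixedPotential (fun v => 0 < D v) C' :=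
        Finset.sum_le_sum fun v _ => by
          split_ifs with hD
          · exact hcover v
          · omega
    _ ≤ mixedPotential (fun v => 0 < D v) C := mixedPotential_le_of_reflTransGen _ hsteps
    _ = ∑ v, C v / 2 :=
        Finset.sum_congr rfl fun v _ => by
          split_ifs with hD
          · rw [hC v hD]
          · rfl

theorem potential_lemma_part2 {V : Type} [Fintype V] [DecidableEq V]
    (G : SimpleGraph V) (hG : G.Connected) (C D : V → ℕ)
    (hsolve : Solvable G C D)
    (hdisj : Disjoint {v : V | 0 < C v} {v : V | 0 < D v}) :
    ∑ v, D v ≤ ∑ v, C v / 2 :=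
  potential_lemma_part2_general G C D hsolve hdisj
end

section
/- For m ≥ 2h + 1 ≥ 3, the vertex connectivity of the Kneser graph K(m, h) equals the binomial coefficient C(m − h, h). -/
/-- The vertex connectivity of `G`: the minimum number of vertices whose deletion
disconnects `G` or reduces it to a single vertex. -/
noncomputable def vertexConnectivity {V : Type} [Fintype V] (G : SimpleGraph V) : ℕ :=
  sInf {k | ∃ s : Finset V, s.card = k ∧
    ((∃ a b : {v : V | v ∉ s}, ¬ (G.induce {v : V | v ∉ s}).Reachable a b) ∨
      Nat.card {v : V | v ∉ s} = 1)}

/-!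
The neighbourhood of a vertex separates it from the rest of the graph, so the connectivity is at
most the degree `C(m - h, h)`. Conversely, the symmetric group acts transitively on ordered pairs of
disjoint `h`-sets, so `K(m, h)` is arc-transitive, and it is connected for `m ≥ 2h + 1`; by
Watkins' theorem such a graph has connectivity equal to its minimum degree.

Watkins' theorem is proved with Mader's atoms. Call `F` a fragment if `N(F) \ F` is a smallest
set separating `F` from a nonempty exterior, and an atom a fragment of least size. By a
submodularity count, an atom meeting a fragment lies inside it, so the images of an atom `A`
under automorphisms are `A` itself or disjoint from it. An edge inside `A` would, by
arc-transitivity, make `A` closed under adjacency, which connectivity forbids; so `A` is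
independent, and its boundary contains the neighbourhood of any of its vertices.
-/

namespace SimpleGraph

open Finset

section Fragments

variable {V : Type*} [Fintype V] [DecidableEq V] (G : SimpleGraph V) [DecidableRel G.Adj]

def vertexBoundary (F : Finset V) : Finset V :=
  univ.filter fun v => v ∉ F ∧ ∃ u ∈ F, G.Adj u v

def exterior (F : Finset V) : Finset V :=
  (F ∪ G.vertexBoundary F)ᶜ

def IsShore (F : Finset V) : Prop :=
  F.Nonempty ∧ (G.exterior F).Nonempty

def IsFragment (F : Finset V) : Prop :=
  G.IsShore F ∧ ∀ F', G.IsShore F' → #(G.vertexBoundary F) ≤ #(G.vertexBoundary F')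

/-- An atom in the sense of Mader. -/
def IsAtomicFragment (A : Finset V) : Prop :=
  G.IsFragment A ∧ ∀ F, G.IsFragment F → #A ≤ #F

variable {G} {A F P Q : Finset V} {u v : V}

@[simp]
lemma mem_vertexBoundary : v ∈ G.vertexBoundary F ↔ v ∉ F ∧ ∃ u ∈ F, G.Adj u v := by
  simp [vertexBoundary]

@[simp]
lemma mem_exterior : v ∈ G.exterior F ↔ v ∉ F ∧ v ∉ G.vertexBoundary F := by
  simp [exterior]

lemma mem_vertexBoundary_of_adj (hu : u ∈ F) (hv : v ∉ F) (huv : G.Adj u v) :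
    v ∈ G.vertexBoundary F :=
  mem_vertexBoundary.2 ⟨hv, u, hu, huv⟩

lemma vertexBoundary_singleton (v : V) : G.vertexBoundary {v} = G.neighborFinset v := by
  ext w
  simp only [mem_vertexBoundary, mem_singleton, exists_eq_left, mem_neighborFinset]
  exact ⟨And.right, fun h => ⟨h.ne', h⟩⟩

lemma card_inter_add_card_inter_vertexBoundary_add_card_inter_exterior (X F : Finset V) :
    #(X ∩ F) + #(X ∩ G.vertexBoundary F) + #(X ∩ G.exterior F) = #X := by
  have hdisj : Disjoint (X ∩ F) (X ∩ G.vertexBoundary F) :=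
    Finset.disjoint_left.2 fun _ hv hv' =>
      (mem_vertexBoundary.1 (mem_inter.1 hv').2).1 (mem_inter.1 hv).2
  rw [← card_union_of_disjoint hdisj, ← inter_union_distrib_left, exterior,
    ← sdiff_eq_inter_compl, card_inter_add_card_sdiff]

lemma vertexBoundary_exterior_subset (F : Finset V) :
    G.vertexBoundary (G.exterior F) ⊆ G.vertexBoundary F := by
  intro v hv
  obtain ⟨hvF, u, huF, huv⟩ := mem_vertexBoundary.1 hv
  rw [mem_exterior] at hvF huF
  by_contra hv'
  exact huF.2 (mem_vertexBoundary_of_adj (not_not.1 fun h => hvF ⟨h, hv'⟩) huF.1 huv.symm)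

lemma subset_exterior_exterior (F : Finset V) : F ⊆ G.exterior (G.exterior F) := by
  intro v hv
  refine mem_exterior.2 ⟨fun h => (mem_exterior.1 h).1 hv, fun h => ?_⟩
  exact (mem_vertexBoundary.1 (vertexBoundary_exterior_subset F h)).1 hv

lemma exterior_subset_exterior_inter (P Q : Finset V) : G.exterior Q ⊆ G.exterior (P ∩ Q) := by
  intro v hv
  simp only [mem_exterior, mem_vertexBoundary, mem_inter] at hv ⊢
  grind

lemma exterior_inter_exterior_subset (P Q : Finset V) :
    G.exterior P ∩ G.exterior Q ⊆ G.exterior (P ∪ Q) := by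
  intro v hv
  simp only [mem_inter, mem_exterior, mem_vertexBoundary, mem_union] at hv ⊢
  grind

lemma vertexBoundary_inter_subset (P Q : Finset V) :
    G.vertexBoundary (P ∩ Q) ⊆ P ∩ G.vertexBoundary Q ∪ G.vertexBoundary P ∩ Q ∪
      G.vertexBoundary P ∩ G.vertexBoundary Q := by
  intro v hv
  simp only [mem_union, mem_inter, mem_vertexBoundary] at hv ⊢
  grind

lemma card_vertexBoundary_inter_add_card_vertexBoundary_union_le (P Q : Finset V) :
    #(G.vertexBoundary (P ∩ Q)) + #(G.vertexBoundary (P ∪ Q)) ≤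
      #(G.vertexBoundary P) + #(G.vertexBoundary Q) := by
  have hunion : G.vertexBoundary (P ∩ Q) ∪ G.vertexBoundary (P ∪ Q) ⊆
      G.vertexBoundary P ∪ G.vertexBoundary Q := by
    intro v hv
    simp only [mem_union, mem_inter, mem_vertexBoundary] at hv ⊢
    grind
  have hinter : G.vertexBoundary (P ∩ Q) ∩ G.vertexBoundary (P ∪ Q) ⊆
      G.vertexBoundary P ∩ G.vertexBoundary Q := by
    intro v hv
    simp only [mem_union, mem_inter, mem_vertexBoundary] at hv ⊢
    grind
  rw [← card_union_add_card_inter, ← card_union_add_card_inter (G.vertexBoundary P)]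
  exact add_le_add (card_le_card hunion) (card_le_card hinter)

lemma IsShore.exterior (hF : G.IsShore F) : G.IsShore (G.exterior F) :=
  ⟨hF.2, hF.1.mono (subset_exterior_exterior F)⟩

lemma IsFragment.exterior (hF : G.IsFragment F) : G.IsFragment (G.exterior F) :=
  ⟨hF.1.exterior, fun F' hF' =>
    (card_le_card (vertexBoundary_exterior_subset F)).trans (hF.2 F' hF')⟩

lemma IsShore.exists_isFragment (hF : G.IsShore F) : ∃ F', G.IsFragment F' := by
  classical
  obtain ⟨F', hF', hmin⟩ := exists_min_image (univ.filter G.IsShore)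
    (fun F => #(G.vertexBoundary F)) ⟨F, mem_filter.2 ⟨mem_univ F, hF⟩⟩
  exact ⟨F', (mem_filter.1 hF').2,
    fun F'' hF'' => hmin F'' (mem_filter.2 ⟨mem_univ F'', hF''⟩)⟩

lemma IsFragment.exists_isAtomicFragment (hF : G.IsFragment F) : ∃ A, G.IsAtomicFragment A := by
  classical
  obtain ⟨A, hA, hmin⟩ := exists_min_image (univ.filter G.IsFragment) card
    ⟨F, mem_filter.2 ⟨mem_univ F, hF⟩⟩
  exact ⟨A, (mem_filter.1 hA).2, fun F' hF' => hmin F' (mem_filter.2 ⟨mem_univ F', hF'⟩)⟩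

/-- Mader's lemma when the two exteriors meet: by submodularity, `A ∩ F` is again a fragment. -/
lemma IsAtomicFragment.subset_of_exterior_inter_nonempty (hA : G.IsAtomicFragment A)
    (hF : G.IsFragment F) (hAF : (A ∩ F).Nonempty)
    (hext : (G.exterior A ∩ G.exterior F).Nonempty) : A ⊆ F := by
  have hinter : G.IsShore (A ∩ F) :=
    ⟨hAF, hF.1.2.mono (exterior_subset_exterior_inter A F)⟩
  have hunion : G.IsShore (A ∪ F) :=
    ⟨hAF.mono (inter_subset_left.trans subset_union_left),
      hext.mono (exterior_inter_exterior_subset A F)⟩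
  have hsub := card_vertexBoundary_inter_add_card_vertexBoundary_union_le (G := G) A F
  have hAunion := hA.1.2 _ hunion
  have hfrag : G.IsFragment (A ∩ F) := ⟨hinter, fun F' hF' => by have := hF.2 F' hF'; omega⟩
  exact inter_eq_left.1 (eq_of_subset_of_card_le inter_subset_left (hA.2 _ hfrag))

/-- Otherwise the exterior of `F`, a fragment no smaller than `A`, lies in `A ∪ N(A)`, and counting
the parts of `A` and `N(A)` cut out by `F`, `N(F)` and the exterior of `F` shows that `A ∩ F` has a
boundary smaller than `N(A)`. -/
lemma IsAtomicFragment.exterior_inter_exterior_nonempty (hA : G.IsAtomicFragment A)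
    (hF : G.IsFragment F) (hAF : (A ∩ F).Nonempty) :
    (G.exterior A ∩ G.exterior F).Nonempty := by
  by_contra hdisj
  have hext : #(G.exterior F ∩ G.exterior A) = 0 := by
    rw [inter_comm, card_eq_zero, ← not_nonempty_iff_eq_empty]
    exact hdisj
  have hAF' : G.IsShore (A ∩ F) := ⟨hAF, hF.1.2.mono (exterior_subset_exterior_inter A F)⟩
  have hbound : #(G.vertexBoundary (A ∩ F)) ≤ #(A ∩ G.vertexBoundary F) +
      #(G.vertexBoundary A ∩ F) + #(G.vertexBoundary A ∩ G.vertexBoundary F) :=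
    (card_le_card (vertexBoundary_inter_subset A F)).trans
      ((card_union_le _ _).trans (Nat.add_le_add_right (card_union_le _ _) _))
  have hpartA := card_inter_add_card_inter_vertexBoundary_add_card_inter_exterior (G := G) A F
  have hpartS := card_inter_add_card_inter_vertexBoundary_add_card_inter_exterior (G := G)
    (G.vertexBoundary A) F
  have hpartF := card_inter_add_card_inter_vertexBoundary_add_card_inter_exterior (G := G)
    (G.exterior F) A
  rw [inter_comm _ A, inter_comm _ (G.vertexBoundary A)] at hpartF
  have hAle := hA.2 _ hF.exterior
  have hSle := hA.1.2 _ hAF'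
  have hpos := card_pos.2 hAF
  omega

lemma IsAtomicFragment.subset_of_inter_nonempty (hA : G.IsAtomicFragment A)
    (hF : G.IsFragment F) (hAF : (A ∩ F).Nonempty) : A ⊆ F :=
  hA.subset_of_exterior_inter_nonempty hF hAF (hA.exterior_inter_exterior_nonempty hF hAF)

end Fragments

section Automorphisms

variable {V W : Type*} [Fintype V] [DecidableEq V] [Fintype W] [DecidableEq W]
  {G : SimpleGraph V} {G' : SimpleGraph W} [DecidableRel G.Adj] [DecidableRel G'.Adj]
  {A F : Finset V}

lemma vertexBoundary_image (φ : G ≃g G') (F : Finset V) :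
    G'.vertexBoundary (F.image φ) = (G.vertexBoundary F).image φ := by
  ext w
  obtain ⟨v, rfl⟩ := φ.surjective w
  simp [φ.injective.mem_finset_image, φ.map_adj_iff]

lemma exterior_image (φ : G ≃g G') (F : Finset V) :
    G'.exterior (F.image φ) = (G.exterior F).image φ := by
  ext w
  obtain ⟨v, rfl⟩ := φ.surjective w
  simp only [mem_exterior, vertexBoundary_image, φ.injective.mem_finset_image]

lemma isShore_image_iff (φ : G ≃g G') : G'.IsShore (F.image φ) ↔ G.IsShore F := by
  simp [IsShore, exterior_image]

lemma IsFragment.image (φ : G ≃g G') (hF : G.IsFragment F) : G'.IsFragment (F.image φ) := by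
  refine ⟨(isShore_image_iff φ).2 hF.1, fun F' hF' => ?_⟩
  obtain ⟨F', rfl⟩ : ∃ F'' : Finset V, F''.image φ = F' :=
    ⟨F'.image φ.symm, by simp [image_image]⟩
  simpa [vertexBoundary_image, card_image_of_injective _ φ.injective] using
    hF.2 F' ((isShore_image_iff φ).1 hF')

lemma IsAtomicFragment.image (φ : G ≃g G') (hA : G.IsAtomicFragment A) :
    G'.IsAtomicFragment (A.image φ) := by
  refine ⟨hA.1.image φ, fun F' hF' => ?_⟩
  obtain ⟨F', rfl⟩ : ∃ F'' : Finset V, F''.image φ = F' :=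
    ⟨F'.image φ.symm, by simp [image_image]⟩
  simpa [card_image_of_injective _ φ.injective] using
    hA.2 F' (by simpa [image_image] using hF'.image φ.symm)

end Automorphisms

def IsArcTransitive {V : Type*} (G : SimpleGraph V) : Prop :=
  ∀ ⦃u v u' v' : V⦄, G.Adj u v → G.Adj u' v' → ∃ φ : G ≃g G, φ u = u' ∧ φ v = v'

section Watkins

variable {V : Type*} [Fintype V] [DecidableEq V] {G : SimpleGraph V} [DecidableRel G.Adj]
  {A F : Finset V} {v w x y : V}

/-- An automorphism sending the edge `xy` of the atom `A` to the edge `vw` at `v ∈ A` moves `A` to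
an atom through `v`, which by Mader's lemma is `A` itself. -/
lemma IsAtomicFragment.mem_of_adj (hG : G.IsArcTransitive) (hA : G.IsAtomicFragment A)
    (hx : x ∈ A) (hy : y ∈ A) (hxy : G.Adj x y) (hv : v ∈ A) (hvw : G.Adj v w) : w ∈ A := by
  obtain ⟨φ, rfl, rfl⟩ := hG hxy hvw
  have hsub : A ⊆ A.image φ :=
    hA.subset_of_inter_nonempty (hA.image φ).1 ⟨φ x, mem_inter.2 ⟨hv, mem_image_of_mem φ hx⟩⟩
  have heq : A = A.image φ :=
    eq_of_subset_of_card_le hsub (card_image_of_injective A φ.injective).le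
  exact heq ▸ mem_image_of_mem φ hy

/-- Watkins' theorem. -/
theorem minDegree_le_card_vertexBoundary (hconn : G.Preconnected) (hG : G.IsArcTransitive)
    (hF : G.IsShore F) : G.minDegree ≤ #(G.vertexBoundary F) := by
  obtain ⟨A, hA⟩ := hF.exists_isFragment.elim fun _ h => h.exists_isAtomicFragment
  refine le_trans ?_ (hA.1.2 F hF)
  obtain ⟨v, hv⟩ := hA.1.1.1
  by_cases hedge : ∃ x ∈ A, ∃ y ∈ A, G.Adj x y
  · obtain ⟨x, hx, y, hy, hxy⟩ := hedge
    obtain ⟨b, hb⟩ := hA.1.1.2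
    obtain ⟨p⟩ := hconn x b
    obtain ⟨d, -, hd, hd'⟩ := p.exists_boundary_dart A hx (mem_exterior.1 hb).1
    exact absurd (hA.mem_of_adj hG hx hy hxy hd d.adj) hd'
  · push Not at hedge
    calc G.minDegree ≤ G.degree v := G.minDegree_le_degree v
      _ = #(G.neighborFinset v) := (card_neighborFinset_eq_degree G v).symm
      _ ≤ #(G.vertexBoundary A) := card_le_card fun w hw =>
        have hvw := (mem_neighborFinset G v w).1 hw
        mem_vertexBoundary_of_adj hv (hedge v hv w · hvw) hvw

end Watkins

/-- The sets over which `vertexConnectivity` minimises. -/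
def IsVertexCut {V : Type} (G : SimpleGraph V) (s : Finset V) : Prop :=
  (∃ a b : {v : V | v ∉ s}, ¬ (G.induce {v : V | v ∉ s}).Reachable a b) ∨
    Nat.card {v : V | v ∉ s} = 1

lemma vertexConnectivity_le_card {V : Type} [Fintype V] {G : SimpleGraph V} {s : Finset V}
    (hs : G.IsVertexCut s) : vertexConnectivity G ≤ #s :=
  Nat.sInf_le ⟨s, rfl, hs⟩

section VertexCut

variable {V : Type} [Fintype V] [DecidableEq V] {G : SimpleGraph V} [DecidableRel G.Adj]
  {F s : Finset V}

lemma not_reachable_induce_of_vertexBoundary_subset {a b : V} (hF : G.vertexBoundary F ⊆ s)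
    (ha : a ∈ F) (hb : b ∉ F) (has : a ∉ s) (hbs : b ∉ s) :
    ¬ (G.induce {v | v ∉ s}).Reachable ⟨a, has⟩ ⟨b, hbs⟩ := by
  rintro ⟨p⟩
  obtain ⟨d, -, hd, hd'⟩ := p.exists_boundary_dart {x | x.1 ∈ F} ha hb
  exact d.snd.2 (hF (mem_vertexBoundary_of_adj hd hd' d.adj))

lemma isVertexCut_neighborFinset (v : V) : G.IsVertexCut (G.neighborFinset v) := by
  by_cases h : ∃ b ∉ G.neighborFinset v, b ≠ v
  · obtain ⟨b, hb, hbv⟩ := h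
    exact Or.inl ⟨⟨v, G.notMem_neighborFinset_self v⟩, ⟨b, hb⟩,
      not_reachable_induce_of_vertexBoundary_subset (vertexBoundary_singleton v).le
        (mem_singleton_self v) (by simpa using hbv) _ _⟩
  · push Not at h
    have hsingle : {x | x ∉ G.neighborFinset v} = {v} :=
      Set.ext fun x => ⟨h x, fun hx => hx ▸ G.notMem_neighborFinset_self v⟩
    exact Or.inr (by rw [hsingle, Nat.card_unique])

lemma vertexConnectivity_le_degree (v : V) : vertexConnectivity G ≤ G.degree v :=
  (vertexConnectivity_le_card (isVertexCut_neighborFinset v)).trans_eq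
    (card_neighborFinset_eq_degree G v)

/-- The component of `a` in the graph with `s` deleted is a shore whose boundary lies in `s`. -/
lemma exists_isShore_of_not_reachable_induce {a b : {v : V | v ∉ s}}
    (hab : ¬ (G.induce {v | v ∉ s}).Reachable a b) :
    ∃ F, G.IsShore F ∧ G.vertexBoundary F ⊆ s := by
  classical
  let F := univ.filter fun x => ∃ hx : x ∉ s, (G.induce {v | v ∉ s}).Reachable a ⟨x, hx⟩
  have hFs : G.vertexBoundary F ⊆ s := by
    intro w hw
    obtain ⟨hwF, u, huF, huw⟩ := mem_vertexBoundary.1 hw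
    by_contra hws
    obtain ⟨_, hu⟩ := (mem_filter.1 huF).2
    exact hwF (mem_filter.2 ⟨mem_univ w, hws, hu.trans (Adj.reachable huw)⟩)
  have haF : a.1 ∈ F := mem_filter.2 ⟨mem_univ _, a.2, Reachable.refl _⟩
  have hbF : b.1 ∉ F := fun h => hab (mem_filter.1 h).2.2
  exact ⟨F, ⟨⟨a, haF⟩, ⟨b, mem_exterior.2 ⟨hbF, fun h => b.2 (hFs h)⟩⟩⟩, hFs⟩

lemma IsVertexCut.exists_isShore_or_card_eq (hs : G.IsVertexCut s) :
    (∃ F, G.IsShore F ∧ G.vertexBoundary F ⊆ s) ∨ #s + 1 = Fintype.card V := by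
  refine hs.imp (fun ⟨a, b, hab⟩ => exists_isShore_of_not_reachable_induce hab) fun hcard => ?_
  have hcompl : {v | v ∉ s} = ((sᶜ : Finset V) : Set V) := by ext; simp
  rw [hcompl, Nat.card_coe_set_eq, Set.ncard_coe_finset, card_compl] at hcard
  have := card_le_univ s
  omega

theorem minDegree_le_vertexConnectivity [Nonempty V] (hconn : G.Preconnected)
    (hG : G.IsArcTransitive) : G.minDegree ≤ vertexConnectivity G := by
  obtain ⟨v⟩ := ‹Nonempty V›
  refine le_csInf ⟨_, _, rfl, isVertexCut_neighborFinset v⟩ ?_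
  rintro _ ⟨s, rfl, hs⟩
  rcases IsVertexCut.exists_isShore_or_card_eq hs with ⟨F, hF, hFs⟩ | hcard
  · exact (minDegree_le_card_vertexBoundary hconn hG hF).trans (card_le_card hFs)
  · have := G.minDegree_lt_card
    omega

end VertexCut

end SimpleGraph

open Finset

theorem Finset.exists_perm_map_eq_map_eq_of_disjoint {α : Type*} [DecidableEq α]
    {s t s' t' : Finset α} (hst : Disjoint s t) (hst' : Disjoint s' t') (hs : #s = #s')
    (ht : #t = #t') :
    ∃ σ : Equiv.Perm α, s.map σ.toEmbedding = s' ∧ t.map σ.toEmbedding = t' := by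
  let es := s.equivOfCardEq hs
  let et := t.equivOfCardEq ht
  obtain ⟨σ, hσ⟩ := Equiv.Perm.exists_extending_pair
    (Sum.elim (fun x : s => (x : α)) fun y : t => (y : α))
    (Sum.elim (fun x : s => (es x : α)) fun y : t => (et y : α))
    (Subtype.val_injective.sumElim Subtype.val_injective fun x y hxy =>
      disjoint_left.1 hst x.2 (hxy ▸ y.2))
    ((Subtype.val_injective.comp es.injective).sumElim (Subtype.val_injective.comp et.injective)
      fun x y hxy => disjoint_left.1 hst' (es x).2
        ((show (es x : α) = et y from hxy) ▸ (et y).2))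
  refine ⟨σ, eq_of_subset_of_card_le ?_ (by simp [hs]), eq_of_subset_of_card_le ?_ (by simp [ht])⟩
  · intro _ hmem
    obtain ⟨x, hx, rfl⟩ := mem_map.1 hmem
    simpa using (hσ (.inl ⟨x, hx⟩)) ▸ (es ⟨x, hx⟩).2
  · intro _ hmem
    obtain ⟨y, hy, rfl⟩ := mem_map.1 hmem
    simpa using (hσ (.inr ⟨y, hy⟩)) ▸ (et ⟨y, hy⟩).2

section Kneser

variable {m h : ℕ}

lemma kneserGraph_adj (hh : 1 ≤ h) {a b : {s : Finset (Fin m) // s.card = h}} :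
    (kneserGraph m h).Adj a b ↔ Disjoint a.1 b.1 := by
  rw [kneserGraph, SimpleGraph.fromRel_adj, disjoint_comm (a := b.1), or_self]
  refine and_iff_right_of_imp fun hab heq => ?_
  rw [heq, disjoint_self_iff_empty] at hab
  have := b.2
  rw [hab, card_empty] at this
  omega

def kneserGraphIsoOfPerm (σ : Equiv.Perm (Fin m)) : kneserGraph m h ≃g kneserGraph m h where
  toEquiv := σ.finsetCongr.subtypeEquiv fun s => by simp
  map_rel_iff' := by simp [kneserGraph]

lemma kneserGraph_isArcTransitive (hh : 1 ≤ h) : (kneserGraph m h).IsArcTransitive := by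
  intro u v u' v' huv hu'v'
  rw [kneserGraph_adj hh] at huv hu'v'
  obtain ⟨σ, hu, hv⟩ := exists_perm_map_eq_map_eq_of_disjoint huv hu'v'
    (u.2.trans u'.2.symm) (v.2.trans v'.2.symm)
  exact ⟨kneserGraphIsoOfPerm σ, Subtype.ext hu, Subtype.ext hv⟩

lemma kneserGraph_isRegularOfDegree [DecidableRel (kneserGraph m h).Adj] (hh : 1 ≤ h) :
    (kneserGraph m h).IsRegularOfDegree ((m - h).choose h) := by
  intro a
  have hmap : ((kneserGraph m h).neighborFinset a).map (Function.Embedding.subtype _) =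
      powersetCard h a.1ᶜ := by
    ext s
    simp [kneserGraph_adj hh, subset_compl_iff_disjoint_left]
  rw [← SimpleGraph.card_neighborFinset_eq_degree, ← card_map, hmap, card_powersetCard,
    card_compl, Fintype.card_fin, a.2]

lemma kneserGraph_reachable_of_card_union_add_le (hh : 1 ≤ h)
    {a b : {s : Finset (Fin m) // s.card = h}} (hab : #(a.1 ∪ b.1) + h ≤ m) :
    (kneserGraph m h).Reachable a b := by
  obtain ⟨c, hc, hcard⟩ := exists_subset_card_eq (s := (a.1 ∪ b.1)ᶜ) (n := h)
    (by rw [card_compl, Fintype.card_fin]; omega)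
  have hdisj := disjoint_union_left.1 (subset_compl_iff_disjoint_left.1 hc)
  exact ((kneserGraph_adj hh (b := ⟨c, hcard⟩)).2 hdisj.1).reachable.trans
    ((kneserGraph_adj hh).2 hdisj.2.symm).reachable

/-- Trading an element of `b \ a` for one of `a \ b` moves `b` one step closer to `a`, and the new
vertex shares `h - 1` elements with `b`, so they have a common neighbour when `2 * h + 1 ≤ m`. -/
lemma kneserGraph_preconnected (hh : 1 ≤ h) (hm : 2 * h + 1 ≤ m) :
    (kneserGraph m h).Preconnected := by
  suffices ∀ n, ∀ a b : {s : Finset (Fin m) // s.card = h}, #(a.1 \ b.1) = n →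
      (kneserGraph m h).Reachable a b from fun a b => this _ a b rfl
  intro n
  induction n with
  | zero =>
    intro a b hab
    rw [card_eq_zero, sdiff_eq_empty_iff_subset] at hab
    obtain rfl : a = b := Subtype.ext (eq_of_subset_of_card_le hab (a.2.trans b.2.symm).ge)
    exact .refl _
  | succ n ih =>
    intro a b hab
    obtain ⟨x, hx⟩ : (a.1 \ b.1).Nonempty := by rw [← card_pos, hab]; omega
    obtain ⟨y, hy⟩ : (b.1 \ a.1).Nonempty := by
      rw [← card_pos, card_sdiff_comm (b.2.trans a.2.symm), hab]; omega
    rw [mem_sdiff] at hx hy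
    have hcard : #(insert x (b.1.erase y)) = h := by
      rw [card_insert_of_notMem fun hmem => hx.2 (mem_of_mem_erase hmem), card_erase_of_mem hy.1,
        b.2]
      omega
    let b' : {s : Finset (Fin m) // s.card = h} := ⟨insert x (b.1.erase y), hcard⟩
    have hab' : #(a.1 \ b'.1) = n := by
      have : a.1 \ b'.1 = (a.1 \ b.1).erase x := by
        ext; simp only [mem_sdiff, mem_erase, ne_eq]; grind
      rw [this, card_erase_of_mem (mem_sdiff.2 hx), hab, Nat.add_sub_cancel]
    refine (ih a b' hab').trans (kneserGraph_reachable_of_card_union_add_le hh ?_)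
    have : #(b'.1 ∪ b.1) ≤ h + 1 := by
      calc #(b'.1 ∪ b.1) ≤ #(insert x b.1) := card_le_card (by
          intro z; simp only [mem_union, mem_insert]; grind)
        _ ≤ h + 1 := (card_insert_le x b.1).trans_eq (by rw [b.2])
    omega

end Kneser

theorem kneser_connectivity (m h : ℕ) (hm : 2 * h + 1 ≤ m) (hh : 1 ≤ h) :
    vertexConnectivity (kneserGraph m h) = (m - h).choose h := by
  classical
  obtain ⟨s, -, hs⟩ := (univ : Finset (Fin m)).exists_subset_card_eq (n := h) (by simp; omega)
  have : Nonempty {s : Finset (Fin m) // s.card = h} := ⟨⟨s, hs⟩⟩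
  have hreg := kneserGraph_isRegularOfDegree (m := m) hh
  refine le_antisymm ((SimpleGraph.vertexConnectivity_le_degree ⟨s, hs⟩).trans_eq (hreg _)) ?_
  rw [← hreg.minDegree_eq]
  exact SimpleGraph.minDegree_le_vertexConnectivity (kneserGraph_preconnected hh hm)
    (kneserGraph_isArcTransitive hh)
end

section
/- For all m ≥ 5, the pebbling number of the Kneser graph K(m, 2) satisfies π(K(m, 2)) = C(m, 2); that is, every configuration of size C(m,2) is r-solvable for every vertex r, and for some vertex r there is a configuration of size C(m,2) − 1 that is not r-solvable. -/
open Finset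

section Moves

variable {V : Type} [DecidableEq V] {G : SimpleGraph V}

def move (C : V → ℕ) (u v : V) : V → ℕ :=
  fun w => if w = u then C u - 2 else if w = v then C v + 1 else C w

@[simp] lemma move_apply_source (C : V → ℕ) (u v : V) : move C u v u = C u - 2 := by
  simp [move]

@[simp] lemma move_apply_target (C : V → ℕ) {u v : V} (h : v ≠ u) :
    move C u v v = C v + 1 := by
  simp [move, h]

@[simp] lemma move_apply_of_ne (C : V → ℕ) {u v w : V} (hu : w ≠ u) (hv : w ≠ v) :
    move C u v w = C w := by
  simp [move, hu, hv]

variable {C : V → ℕ}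

lemma solvable_of_move {D : V → ℕ} {u v : V} (h : G.Adj u v) (h2 : 2 ≤ C u)
    (hs : Solvable G (move C u v) D) : Solvable G C D := by
  obtain ⟨E, hE, hD⟩ := hs
  exact ⟨E, .head ⟨u, v, h, h2, rfl⟩ hE, hD⟩

lemma solvable_stack_one_of_pos {r : V} (h : 1 ≤ C r) :
    Solvable G C (stack r 1) :=
  ⟨C, .refl, fun v => by unfold stack; split <;> simp_all⟩

lemma solvable_of_adj {r w : V} (hwr : G.Adj w r) (hw : 2 ≤ C w) :
    Solvable G C (stack r 1) :=
  solvable_of_move hwr hw (solvable_stack_one_of_pos (by simp [hwr.ne']))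

-- In `solvable_of_path_*` the numbers are the pebbles required along a path from its far end
-- towards the root, trailing zeros omitted; a fork is two such paths joined at a neighbour of
-- the root.
lemma solvable_of_path_2_1 {r u w : V} (huw : G.Adj u w) (hwr : G.Adj w r)
    (hu : 2 ≤ C u) (hw : 1 ≤ C w) : Solvable G C (stack r 1) :=
  solvable_of_move huw hu (solvable_of_adj hwr (by simp [huw.ne']; omega))

lemma solvable_of_path_4 {r u w : V} (huw : G.Adj u w) (hwr : G.Adj w r)
    (hu : 4 ≤ C u) : Solvable G C (stack r 1) :=
  solvable_of_move huw (by omega)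
    (solvable_of_path_2_1 huw hwr (by simp; omega) (by simp [huw.ne']))

lemma solvable_of_fork_2_2 {r u v w : V} (huw : G.Adj u w) (hvw : G.Adj v w)
    (hwr : G.Adj w r) (huv : u ≠ v) (hu : 2 ≤ C u) (hv : 2 ≤ C v) :
    Solvable G C (stack r 1) :=
  solvable_of_move huw hu
    (solvable_of_path_2_1 hvw hwr (by simp [huv.symm, hvw.ne]; omega) (by simp [huw.ne']))

lemma solvable_of_path_2_1_1 {r u v w : V} (huv : G.Adj u v) (hvw : G.Adj v w)
    (hwr : G.Adj w r) (huw : u ≠ w) (hu : 2 ≤ C u) (hv : 1 ≤ C v) (hw : 1 ≤ C w) :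
    Solvable G C (stack r 1) :=
  solvable_of_move huv hu
    (solvable_of_path_2_1 hvw hwr (by simp [huv.ne']; omega)
      (by simp [huw.symm, hvw.ne']; omega))

lemma solvable_of_path_2_3 {r u v w : V} (huv : G.Adj u v) (hvw : G.Adj v w)
    (hwr : G.Adj w r) (hu : 2 ≤ C u) (hv : 3 ≤ C v) : Solvable G C (stack r 1) :=
  solvable_of_move huv hu (solvable_of_path_4 hvw hwr (by simp [huv.ne']; omega))

lemma solvable_of_fork_2_1_2 {r u₁ u₂ v w : V} (hu₁v : G.Adj u₁ v) (hvw : G.Adj v w)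
    (hu₂w : G.Adj u₂ w) (hwr : G.Adj w r) (hu₁u₂ : u₁ ≠ u₂) (hvu₂ : v ≠ u₂)
    (hu₁ : 2 ≤ C u₁) (hv : 1 ≤ C v) (hu₂ : 2 ≤ C u₂) : Solvable G C (stack r 1) :=
  solvable_of_move hu₁v hu₁
    (solvable_of_fork_2_2 hvw hu₂w hwr hvu₂ (by simp [hu₁v.ne']; omega)
      (by simp [hu₁u₂.symm, hvu₂.symm]; omega))

lemma not_solvable_of_le_one {r : V} (h : ∀ v, C v ≤ 1) (hr : C r = 0) :
    ¬ Solvable G C (stack r 1) := by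
  rintro ⟨E, hE, hD⟩
  rcases hE.cases_head with rfl | ⟨_, ⟨u, _, _, hu, _⟩, _⟩
  · simpa [stack, hr] using hD r
  · exact absurd (h u) (by omega)

lemma branch_sum_le_one {r u b a : V} (hns : ¬ Solvable G C (stack r 1)) (hub : G.Adj u b)
    (hba : G.Adj b a) (har : G.Adj a r) (hua : u ≠ a) (hu : 2 ≤ C u) (hb : C b ≤ 1) :
    C a + C b ≤ 1 := by
  have ha : C a ≤ 1 := not_lt.1 fun h => hns (solvable_of_adj har h)
  have hab : 1 ≤ C b → C a = 0 := fun hb' =>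
    Nat.eq_zero_of_not_pos fun h => hns (solvable_of_path_2_1_1 hub hba har hua hu hb' h)
  omega

lemma branch_sum_le_three {r u b a d : V} (hns : ¬ Solvable G C (stack r 1))
    (hub : G.Adj u b) (hba : G.Adj b a) (har : G.Adj a r) (hda : G.Adj d a) (hua : u ≠ a)
    (hud : u ≠ d) (hbd : b ≠ d) (hu : 2 ≤ C u) : C a + C b + C d ≤ 3 := by
  have ha : C a ≤ 1 := not_lt.1 fun h => hns (solvable_of_adj har h)
  have hab : 1 ≤ C b → C a = 0 := fun hb' =>
    Nat.eq_zero_of_not_pos fun h => hns (solvable_of_path_2_1_1 hub hba har hua hu hb' h)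
  have had : 2 ≤ C d → C a = 0 := fun hd' =>
    Nat.eq_zero_of_not_pos fun h => hns (solvable_of_path_2_1 hda har hd' h)
  have hd : C d ≤ 3 := not_lt.1 fun h => hns (solvable_of_path_4 hda har h)
  have hb : C b ≤ 2 := not_lt.1 fun h => hns (solvable_of_path_2_3 hub hba har hu h)
  have hdb : 1 ≤ C b → C d ≤ 1 := fun hb' =>
    not_lt.1 fun h => hns (solvable_of_fork_2_1_2 hub hba hda har hud hbd hu hb' h)
  omega

end Moves

section Isomorphism

variable {V W : Type} [DecidableEq V] [DecidableEq W] {G : SimpleGraph V} {H : SimpleGraph W}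

lemma PebblingStep.comp_iso (e : G ≃g H) {C C' : W → ℕ} (h : PebblingStep H C C') :
    PebblingStep G (C ∘ e) (C' ∘ e) := by
  obtain ⟨u, v, huv, hu, rfl⟩ := h
  refine ⟨e.symm u, e.symm v, e.symm.map_adj_iff.2 huv, by simpa using hu, ?_⟩
  funext w
  simp only [Function.comp_apply, ← e.apply_eq_iff_eq, RelIso.apply_symm_apply]

lemma Solvable.comp_iso (e : G ≃g H) {C D : W → ℕ} (h : Solvable H C D) :
    Solvable G (C ∘ e) (D ∘ e) := by
  obtain ⟨E, hE, hD⟩ := h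
  exact ⟨E ∘ e, hE.lift (· ∘ e) fun _ _ => PebblingStep.comp_iso e, fun v => hD (e v)⟩

lemma Solvable.stack_of_comp_iso (e : G ≃g H) {C : W → ℕ} {r : V}
    (h : Solvable G (C ∘ e) (stack r 1)) : Solvable H C (stack (e r) 1) := by
  convert h.comp_iso e.symm using 1 <;> funext w
  · simp
  · simp [stack, RelIso.symm_apply_eq]

end Isomorphism

section Counting

variable {V : Type} [Fintype V]

lemma sum_add_card_filter_eq_zero (C : V → ℕ) :
    ∑ v, C v + #{v | C v = 0} = Fintype.card V + ∑ v, (C v - 1) := by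
  rw [card_filter, ← sum_add_distrib, Fintype.card_eq_sum_ones, ← sum_add_distrib]
  refine Finset.sum_congr rfl fun v _ => ?_
  split <;> omega

lemma exists_two_le_of_sum_eq_card {C : V → ℕ} {r : V} (hsum : ∑ v, C v = Fintype.card V)
    (hr : C r = 0) : ∃ u, 2 ≤ C u := by
  have hzero : 0 < #{v | C v = 0} := card_pos.2 ⟨r, by simpa using hr⟩
  have hexcess : 0 < ∑ v, (C v - 1) := by
    have := sum_add_card_filter_eq_zero C
    omega
  obtain ⟨u, -, hu⟩ := exists_ne_zero_of_sum_ne_zero hexcess.ne'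
  exact ⟨u, by omega⟩

lemma card_filter_eq_zero_add_one {C : V → ℕ} {u : V} (hsum : ∑ v, C v = Fintype.card V)
    (hle : ∀ v ≠ u, C v ≤ 1) : #{v | C v = 0} + 1 = C u := by
  have hexcess : ∑ v, (C v - 1) = C u - 1 :=
    sum_eq_single u (fun v _ hv => by have := hle v hv; omega) (by simp)
  have hu : C u = 0 → 0 < #{v | C v = 0} := fun h => card_pos.2 ⟨u, by simpa using h⟩
  have := sum_add_card_filter_eq_zero C
  omega

end Counting

section PebblingNumber

variable {V : Type} [Fintype V] [DecidableEq V] {G : SimpleGraph V}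

lemma exists_not_solvable_of_lt_card (r : V) {k : ℕ} (hk : k < Fintype.card V) :
    ∃ C : V → ℕ, ∑ v, C v = k ∧ ¬ Solvable G C (stack r 1) := by
  obtain ⟨T, hT, rfl⟩ := exists_subset_card_eq (s := univ.erase r) (n := k)
    (by rw [card_erase_of_mem (mem_univ r), card_univ]; omega)
  have hrT : r ∉ T := fun h => by simpa using hT h
  refine ⟨fun v => if v ∈ T then 1 else 0, by simp,
    not_solvable_of_le_one (fun v => by split <;> omega) (by simp [hrT])⟩

lemma pebblingNumber_stack_one_eq_card (r : V)
    (h : ∀ C : V → ℕ, ∑ v, C v = Fintype.card V → Solvable G C (stack r 1)) :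
    pebblingNumber G (stack r 1) = Fintype.card V := by
  refine le_antisymm (Nat.sInf_le h) (le_csInf ⟨_, h⟩ fun k hk => ?_)
  by_contra! hlt
  obtain ⟨C, hC, hns⟩ := exists_not_solvable_of_lt_card (G := G) r hlt
  exact hns (hk C hC)

lemma tPebblingNumber_one_eq_card [Nonempty V]
    (h : ∀ (r : V) (C : V → ℕ), ∑ v, C v = Fintype.card V → Solvable G C (stack r 1)) :
    tPebblingNumber G 1 = Fintype.card V := by
  simp only [tPebblingNumber, pebblingNumber_stack_one_eq_card _ (h _)]
  exact sup_const univ_nonempty _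

end PebblingNumber

section Kneser

variable {m : ℕ}

abbrev TwoSubset (m : ℕ) := {s : Finset (Fin m) // #s = 2}

lemma card_twoSubset : Fintype.card (TwoSubset m) = m.choose 2 := by
  rw [Fintype.card_finset_len, Fintype.card_fin]

lemma kneserGraph_adj_iff {h : ℕ} (hh : h ≠ 0) {u v : {s : Finset (Fin m) // #s = h}} :
    (kneserGraph m h).Adj u v ↔ Disjoint u.1 v.1 := by
  refine ⟨fun ⟨_, huv⟩ => huv.elim id fun h => h.symm, fun huv => ⟨?_, .inl huv⟩⟩
  rintro rfl
  exact hh (by simpa [disjoint_self.1 huv] using u.2.symm)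

instance (h : ℕ) : DecidableRel (kneserGraph m h).Adj :=
  fun u v => inferInstanceAs (Decidable (u ≠ v ∧ _))

def kneserGraphPermIso {h : ℕ} (σ : Equiv.Perm (Fin m)) :
    kneserGraph m h ≃g kneserGraph m h where
  toEquiv := σ.finsetCongr.subtypeEquiv fun s => by simp
  map_rel_iff' := by simp [kneserGraph, disjoint_map]

@[simp] lemma kneserGraphPermIso_apply_coe {h : ℕ} (σ : Equiv.Perm (Fin m))
    (v : {s : Finset (Fin m) // #s = h}) : (kneserGraphPermIso σ v).1 = v.1.map σ.toEmbedding :=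
  rfl

lemma card_union_le_three_of_not_adj {u r : TwoSubset m} (h : ¬ (kneserGraph m 2).Adj u r) :
    #(u.1 ∪ r.1) ≤ 3 := by
  rw [kneserGraph_adj_iff two_ne_zero, not_disjoint_iff_nonempty_inter] at h
  have := card_union_add_card_inter u.1 r.1
  have := h.card_pos
  have := u.2
  have := r.2
  omega

lemma exists_twoSubset_disjoint (t : Finset (Fin m)) (h : #t + 2 ≤ m) :
    ∃ w : TwoSubset m, Disjoint w.1 t := by
  obtain ⟨w, hw, hwc⟩ := exists_subset_card_eq (s := tᶜ) (n := 2)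
    (by rw [card_compl, Fintype.card_fin]; omega)
  exact ⟨⟨w, hwc⟩, subset_compl_iff_disjoint_right.1 hw⟩

lemma exists_two_twoSubset_disjoint (t : Finset (Fin m)) (h : #t + 3 ≤ m) :
    ∃ w₁ w₂ : TwoSubset m, w₁ ≠ w₂ ∧ Disjoint w₁.1 t ∧ Disjoint w₂.1 t := by
  obtain ⟨w₁, hw₁⟩ := exists_twoSubset_disjoint t (by omega)
  obtain ⟨x, hx⟩ := card_pos.1 (by rw [w₁.2]; omega : 0 < #w₁.1)
  obtain ⟨w₂, hw₂⟩ := exists_twoSubset_disjoint (insert x t)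
    (by have := card_insert_le x t; omega)
  rw [disjoint_insert_right] at hw₂
  exact ⟨w₁, w₂, fun h => hw₂.1 (h ▸ hx), hw₁, hw₂.2⟩

end Kneser

section LargeKneser

variable {m : ℕ}

lemma exists_two_common_neighbors (hm : 6 ≤ m) {u r : TwoSubset m}
    (h : ¬ (kneserGraph m 2).Adj u r) :
    ∃ w₁ w₂, w₁ ≠ w₂ ∧
      (kneserGraph m 2).Adj u w₁ ∧ (kneserGraph m 2).Adj w₁ r ∧
      (kneserGraph m 2).Adj u w₂ ∧ (kneserGraph m 2).Adj w₂ r := by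
  obtain ⟨w₁, w₂, hw₁₂, hw₁, hw₂⟩ := exists_two_twoSubset_disjoint (u.1 ∪ r.1)
    (by have := card_union_le_three_of_not_adj h; omega)
  rw [disjoint_union_right] at hw₁ hw₂
  simp only [kneserGraph_adj_iff two_ne_zero]
  exact ⟨w₁, w₂, hw₁₂, hw₁.1.symm, hw₁.2, hw₂.1.symm, hw₂.2⟩

lemma exists_common_neighbor_of_not_adj (hm : 6 ≤ m) {u v r : TwoSubset m}
    (hu : ¬ (kneserGraph m 2).Adj u r) (hv : ¬ (kneserGraph m 2).Adj v r) :
    ∃ w, (kneserGraph m 2).Adj u w ∧ (kneserGraph m 2).Adj v w ∧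
      (kneserGraph m 2).Adj w r := by
  have huvr : #((u.1 ∪ r.1) ∪ (v.1 ∪ r.1)) ≤ 4 := by
    have := card_union_add_card_inter (u.1 ∪ r.1) (v.1 ∪ r.1)
    have := card_le_card (subset_inter subset_union_right subset_union_right :
      r.1 ⊆ (u.1 ∪ r.1) ∩ (v.1 ∪ r.1))
    have := card_union_le_three_of_not_adj hu
    have := card_union_le_three_of_not_adj hv
    have := r.2
    omega
  obtain ⟨w, hw⟩ := exists_twoSubset_disjoint ((u.1 ∪ r.1) ∪ (v.1 ∪ r.1)) (by omega)
  simp only [disjoint_union_right] at hw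
  simp only [kneserGraph_adj_iff two_ne_zero]
  exact ⟨w, hw.1.1.symm, hw.2.1.symm, hw.1.2⟩

lemma solvable_of_six_le (hm : 6 ≤ m) (r : TwoSubset m) (C : TwoSubset m → ℕ)
    (hsum : ∑ v, C v = m.choose 2) : Solvable (kneserGraph m 2) C (stack r 1) := by
  by_contra hns
  have hr : C r = 0 := Nat.eq_zero_of_not_pos fun h => hns (solvable_stack_one_of_pos h)
  have not_adj {v} (hv : 2 ≤ C v) : ¬ (kneserGraph m 2).Adj v r := fun h =>
    hns (solvable_of_adj h hv)
  have hcard : ∑ v, C v = Fintype.card (TwoSubset m) := by rw [hsum, card_twoSubset]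
  obtain ⟨u, hu⟩ := exists_two_le_of_sum_eq_card hcard hr
  have light (v) (hvu : v ≠ u) : C v ≤ 1 := not_lt.1 fun hv => by
    obtain ⟨w, huw, hvw, hwr⟩ :=
      exists_common_neighbor_of_not_adj hm (not_adj hu) (not_adj hv)
    exact hns (solvable_of_fork_2_2 huw hvw hwr hvu.symm hu hv)
  obtain ⟨w₁, w₂, hw₁₂, huw₁, hw₁r, huw₂, hw₂r⟩ :=
    exists_two_common_neighbors hm (not_adj hu)
  have hu3 : C u ≤ 3 := not_lt.1 fun h => hns (solvable_of_path_4 huw₁ hw₁r h)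
  have empty {w} (huw : (kneserGraph m 2).Adj u w) (hwr : (kneserGraph m 2).Adj w r) :
      C w = 0 :=
    Nat.eq_zero_of_not_pos fun h => hns (solvable_of_path_2_1 huw hwr hu h)
  have hsub : {r, w₁, w₂} ⊆ ({v | C v = 0} : Finset (TwoSubset m)) := by
    intro v
    simp only [mem_insert, mem_singleton, mem_filter, mem_univ, true_and]
    rintro (rfl | rfl | rfl)
    exacts [hr, empty huw₁ hw₁r, empty huw₂ hw₂r]
  have hzero := card_le_card hsub
  rw [card_eq_three.2 ⟨r, w₁, w₂, hw₁r.ne', hw₂r.ne', hw₁₂, rfl⟩] at hzero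
  have := card_filter_eq_zero_add_one hcard light
  omega

end LargeKneser

section Petersen

abbrev q01 : TwoSubset 5 := ⟨{0, 1}, rfl⟩
abbrev q02 : TwoSubset 5 := ⟨{0, 2}, rfl⟩
abbrev q03 : TwoSubset 5 := ⟨{0, 3}, rfl⟩
abbrev q04 : TwoSubset 5 := ⟨{0, 4}, rfl⟩
abbrev q12 : TwoSubset 5 := ⟨{1, 2}, rfl⟩
abbrev q13 : TwoSubset 5 := ⟨{1, 3}, rfl⟩
abbrev q14 : TwoSubset 5 := ⟨{1, 4}, rfl⟩
abbrev q23 : TwoSubset 5 := ⟨{2, 3}, rfl⟩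
abbrev q24 : TwoSubset 5 := ⟨{2, 4}, rfl⟩
abbrev q34 : TwoSubset 5 := ⟨{3, 4}, rfl⟩

lemma sum_twoSubset_five (C : TwoSubset 5 → ℕ) : ∑ v, C v =
    C q01 + C q02 + C q03 + C q04 + C q12 + C q13 + C q14 + C q23 + C q24 + C q34 := by
  rw [show (univ : Finset (TwoSubset 5)) = {q01, q02, q03, q04, q12, q13, q14, q23, q24, q34}
    by decide]
  simp +decide [add_assoc]

-- The six vertices meeting `q01` hang off its neighbours in pairs: `q02, q12` off `q34`,
-- `q03, q13` off `q24` and `q04, q14` off `q23`.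
lemma petersen_solvable_of_two_le (C : TwoSubset 5 → ℕ) (hsum : ∑ v, C v = 10)
    (h02 : 2 ≤ C q02) : Solvable (kneserGraph 5 2) C (stack q01 1) := by
  by_contra hns
  have h01 : C q01 = 0 := Nat.eq_zero_of_not_pos fun h => hns (solvable_stack_one_of_pos h)
  have h34 : C q34 = 0 := Nat.eq_zero_of_not_pos fun h =>
    hns (solvable_of_path_2_1 (w := q34) (by decide) (by decide) h02 h)
  have h02_le : C q02 ≤ 3 := not_lt.1 fun h =>
    hns (solvable_of_path_4 (w := q34) (by decide) (by decide) h)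
  have h12 : C q12 ≤ 1 := not_lt.1 fun h =>
    hns (solvable_of_fork_2_2 (w := q34) (by decide) (by decide) (by decide) (by decide) h02 h)
  have branch3 : C q24 + C q13 + C q03 ≤ 3 := branch_sum_le_three (b := q13) hns (by decide)
    (by decide) (by decide) (by decide) (by decide) (by decide) (by decide) h02
  have branch4 : C q23 + C q14 + C q04 ≤ 3 := branch_sum_le_three (b := q14) hns (by decide)
    (by decide) (by decide) (by decide) (by decide) (by decide) (by decide) h02
  have branch3' : C q13 ≤ 1 → C q24 + C q13 ≤ 1 :=
    branch_sum_le_one hns (by decide) (by decide) (by decide) (by decide) h02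
  have branch4' : C q14 ≤ 1 → C q23 + C q14 ≤ 1 :=
    branch_sum_le_one hns (by decide) (by decide) (by decide) (by decide) h02
  have h03 : 1 ≤ C q12 → C q03 ≤ 1 := fun h => not_lt.1 fun h' =>
    hns (solvable_of_fork_2_1_2 (w := q34) (by decide) (by decide) (by decide) (by decide)
      (by decide) (by decide) h' h h02)
  have h04 : 1 ≤ C q12 → C q04 ≤ 1 := fun h => not_lt.1 fun h' =>
    hns (solvable_of_fork_2_1_2 (w := q34) (by decide) (by decide) (by decide) (by decide)
      (by decide) (by decide) h' h h02)
  have h13 : 2 ≤ C q13 → C q02 ≤ 2 := fun h => not_lt.1 fun h' =>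
    hns (solvable_of_path_2_3 (w := q34) (by decide) (by decide) (by decide) h h')
  have h14 : 2 ≤ C q14 → C q02 ≤ 2 := fun h => not_lt.1 fun h' =>
    hns (solvable_of_path_2_3 (w := q34) (by decide) (by decide) (by decide) h h')
  rw [sum_twoSubset_five] at hsum
  omega

lemma exists_perm_q01_q02 {r u : TwoSubset 5} (hru : r ≠ u) (h : ¬ Disjoint u.1 r.1) :
    ∃ σ : Equiv.Perm (Fin 5),
      kneserGraphPermIso σ q01 = r ∧ kneserGraphPermIso σ q02 = u := by
  obtain ⟨a, ha⟩ := not_disjoint_iff_nonempty_inter.1 h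
  rw [mem_inter] at ha
  have not_subset {s t : TwoSubset 5} (hst : s ≠ t) : ¬ s.1 ⊆ t.1 := fun hs =>
    hst (Subtype.ext (eq_of_subset_of_card_le hs (by rw [s.2, t.2])))
  obtain ⟨b, hb⟩ := sdiff_nonempty.2 (not_subset hru)
  obtain ⟨c, hc⟩ := sdiff_nonempty.2 (not_subset hru.symm)
  rw [mem_sdiff] at hb hc
  have hab : a ≠ b := by rintro rfl; exact hb.2 ha.1
  have hac : a ≠ c := by rintro rfl; exact hc.2 ha.2
  have hbc : b ≠ c := by rintro rfl; exact hb.2 hc.1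
  have pair_eq {x y : Fin 5} {s : TwoSubset 5} (hxy : x ≠ y) (hx : x ∈ s.1) (hy : y ∈ s.1) :
      ({x, y} : Finset (Fin 5)) = s.1 :=
    eq_of_subset_of_card_le (insert_subset hx (singleton_subset_iff.2 hy))
      (by rw [s.2, card_pair hxy])
  obtain ⟨σ, hσ⟩ := Equiv.Perm.exists_extending_pair ![0, 1, 2] ![a, b, c] (by decide)
    (by intro i j; fin_cases i <;> fin_cases j <;> simp [hab, hac, hbc, eq_comm])
  have h0 : σ 0 = a := hσ 0
  have h1 : σ 1 = b := hσ 1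
  have h2 : σ 2 = c := hσ 2
  refine ⟨σ, Subtype.ext ?_, Subtype.ext ?_⟩
  · simpa [h0, h1] using pair_eq hab ha.2 hb.1
  · simpa [h0, h2] using pair_eq hac ha.1 hc.1

lemma petersen_solvable (r : TwoSubset 5) (C : TwoSubset 5 → ℕ) (hsum : ∑ v, C v = 10) :
    Solvable (kneserGraph 5 2) C (stack r 1) := by
  by_contra hns
  have hr : C r = 0 := Nat.eq_zero_of_not_pos fun h => hns (solvable_stack_one_of_pos h)
  obtain ⟨u, hu⟩ := exists_two_le_of_sum_eq_card (by rw [hsum, card_twoSubset]; rfl) hr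
  have hur : ¬ Disjoint u.1 r.1 := fun h =>
    hns (solvable_of_adj ((kneserGraph_adj_iff two_ne_zero).2 h) hu)
  have hru : r ≠ u := by rintro rfl; omega
  obtain ⟨σ, rfl, rfl⟩ := exists_perm_q01_q02 hru hur
  refine hns (Solvable.stack_of_comp_iso _ (petersen_solvable_of_two_le _ ?_ hu))
  rw [← hsum]
  exact (kneserGraphPermIso σ).toEquiv.sum_comp C

end Petersen

theorem kneser_pebbling_number (m : ℕ) (hm : 5 ≤ m) :
    tPebblingNumber (kneserGraph m 2) 1 = m.choose 2 ∧
    (∀ (r : {s : Finset (Fin m) // s.card = 2}) (C : {s : Finset (Fin m) // s.card = 2} → ℕ),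
      (∑ v, C v) = m.choose 2 → Solvable (kneserGraph m 2) C (stack r 1)) ∧
    (∃ (r : {s : Finset (Fin m) // s.card = 2}) (C : {s : Finset (Fin m) // s.card = 2} → ℕ),
      (∑ v, C v) = m.choose 2 - 1 ∧ ¬ Solvable (kneserGraph m 2) C (stack r 1)) := by
  have solvable (r : TwoSubset m) (C : TwoSubset m → ℕ) (hsum : ∑ v, C v = m.choose 2) :
      Solvable (kneserGraph m 2) C (stack r 1) := by
    obtain rfl | hm := hm.eq_or_lt
    · exact petersen_solvable r C hsum
    · exact solvable_of_six_le hm r C hsum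
  have hcard : Fintype.card (TwoSubset m) = m.choose 2 := card_twoSubset
  have hpos : 0 < m.choose 2 := Nat.choose_pos (by omega)
  have : Nonempty (TwoSubset m) := Fintype.card_pos_iff.1 (hcard ▸ hpos)
  refine ⟨hcard ▸ tPebblingNumber_one_eq_card (hcard ▸ solvable), solvable, ?_⟩
  obtain ⟨r⟩ := this
  obtain ⟨C, hC, hns⟩ := exists_not_solvable_of_lt_card (G := kneserGraph m 2) r
    (k := m.choose 2 - 1) (by rw [hcard]; omega)
  exact ⟨r, C, hC, hns⟩
end

section
/- Let r be a vertex of G = K(m, 2) for m ≥ 5 and t ≥ 1, and let x be a vertex at distance 2 from r. Then the configuration C_{t,1} with 2t − 1 pebbles on x, one pebble on every other vertex except r, and zero pebbles on r (so |C_{t,1}| = C(m,2) + 2t − 3) is not t-fold r-solvable. -/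
/-- Φ is monotone along reflexive-transitive closures of pebbling steps. -/
lemma phi_rtg_mono {V : Type} [Fintype V] [DecidableEq V] {G : SimpleGraph V} (r : V)
    {C C' : V → ℕ} (h : Relation.ReflTransGen (PebblingStep G) C C')
    (hstep : ∀ {D D' : V → ℕ}, PebblingStep G D D' →
      (∑ w, if w = r then D' w else D' w / 2) ≤ (∑ w, if w = r then D w else D w / 2)) :
    (∑ w, if w = r then C' w else C' w / 2) ≤ (∑ w, if w = r then C w else C w / 2) := by
  induction h with
  | refl => exact le_refl _
  | tail _ h2 ih => exact le_trans (hstep h2) ih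

/-- The potential `Φ(C) = C r + ∑_{v ≠ r} ⌊C v / 2⌋` never increases under a pebbling step. -/
lemma phi_step_mono {V : Type} [Fintype V] [DecidableEq V] {G : SimpleGraph V} (r : V)
    {C C' : V → ℕ} (h : PebblingStep G C C') :
    (∑ w, if w = r then C' w else C' w / 2) ≤ (∑ w, if w = r then C w else C w / 2) := by
  obtain ⟨u, v, hadj, hcu, rfl⟩ := h
  have huv : u ≠ v := hadj.ne
  have hvmem : v ∈ Finset.univ.erase u := Finset.mem_erase.mpr ⟨huv.symm, Finset.mem_univ v⟩
  have split : ∀ D : V → ℕ,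
      (∑ w, if w = r then D w else D w / 2) =
      ((if u = r then D u else D u / 2) + ((if v = r then D v else D v / 2) +
        ∑ w ∈ (Finset.univ.erase u).erase v, (if w = r then D w else D w / 2))) := by
    intro D
    rw [← Finset.add_sum_erase Finset.univ (fun w => if w = r then D w else D w / 2)
          (Finset.mem_univ u),
        ← Finset.add_sum_erase (Finset.univ.erase u) (fun w => if w = r then D w else D w / 2)
          hvmem]
  rw [split, split]
  have hrest : ∑ w ∈ (Finset.univ.erase u).erase v,
      (if w = r then (fun w => if w = u then C u - 2 else if w = v then C v + 1 else C w) w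
        else (fun w => if w = u then C u - 2 else if w = v then C v + 1 else C w) w / 2) =
      ∑ w ∈ (Finset.univ.erase u).erase v, (if w = r then C w else C w / 2) := by
    refine Finset.sum_congr rfl fun w hw => ?_
    have hw1 : w ≠ v := (Finset.mem_erase.mp hw).1
    have hw2 : w ≠ u := (Finset.mem_erase.mp (Finset.mem_erase.mp hw).2).1
    simp [hw1, hw2]
  rw [hrest]
  simp only [if_pos rfl, if_neg huv, if_neg huv.symm]
  split_ifs <;> omega

theorem kneser_Ct1_unsolvable (m t : ℕ) (hm : 5 ≤ m) (ht : 1 ≤ t)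
    (r x : {s : Finset (Fin m) // s.card = 2})
    (hx : (kneserGraph m 2).dist r x = 2)
    (C : {s : Finset (Fin m) // s.card = 2} → ℕ)
    (hC : C = fun v => if v = r then 0 else if v = x then 2 * t - 1 else 1) :
    (∑ v, C v) = m.choose 2 + 2 * t - 3 ∧
    ¬ Solvable (kneserGraph m 2) C (stack r t) := by
  have hrx : r ≠ x := by
    intro h
    rw [h, SimpleGraph.dist_self] at hx
    omega
  have hcardV : Fintype.card {s : Finset (Fin m) // s.card = 2} = m.choose 2 := by
    rw [Fintype.card_finset_len]
    simp [Fintype.card_fin]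
  have hchoose : 10 ≤ m.choose 2 := by
    calc 10 = Nat.choose 5 2 := by decide
    _ ≤ m.choose 2 := Nat.choose_le_choose 2 hm
  have hxmem : x ∈ Finset.univ.erase r := Finset.mem_erase.mpr ⟨hrx.symm, Finset.mem_univ x⟩
  constructor
  · -- the size computation
    subst hC
    rw [← Finset.add_sum_erase _ _ (Finset.mem_univ r),
        ← Finset.add_sum_erase _ _ hxmem]
    have hrval : (if r = r then 0 else if r = x then 2 * t - 1 else 1) = 0 := by simp
    have hxval : (if x = r then 0 else if x = x then 2 * t - 1 else 1) = 2 * t - 1 := by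
      simp [hrx.symm]
    rw [hrval, hxval]
    have hrest : ∑ v ∈ (Finset.univ.erase r).erase x,
        (if v = r then 0 else if v = x then 2 * t - 1 else (1:ℕ)) =
        ∑ v ∈ (Finset.univ.erase r).erase x, 1 := by
      refine Finset.sum_congr rfl fun w hw => ?_
      have hw1 : w ≠ x := (Finset.mem_erase.mp hw).1
      have hw2 : w ≠ r := (Finset.mem_erase.mp (Finset.mem_erase.mp hw).2).1
      simp [hw1, hw2]
    rw [hrest, Finset.sum_const, smul_eq_mul, mul_one,
        Finset.card_erase_of_mem hxmem, Finset.card_erase_of_mem (Finset.mem_univ r),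
        Finset.card_univ, hcardV]
    omega
  · -- unsolvability via the potential Φ
    rintro ⟨C', hsteps, hge⟩
    have hmono : (∑ w, if w = r then C' w else C' w / 2) ≤
        (∑ w, if w = r then C w else C w / 2) :=
      phi_rtg_mono r hsteps (fun h => phi_step_mono r h)
    have hCphi : (∑ w, if w = r then C w else C w / 2) = t - 1 := by
      subst hC
      have : ∀ w : {s : Finset (Fin m) // s.card = 2},
          (if w = r then (if w = r then 0 else if w = x then 2 * t - 1 else 1)
            else (if w = r then 0 else if w = x then 2 * t - 1 else (1:ℕ)) / 2) =
          (if w = x then t - 1 else 0) := by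
        intro w
        rcases eq_or_ne w r with h1 | h1
        · simp [h1, hrx]
        · rcases eq_or_ne w x with h2 | h2
          · simp [h1, h2, hrx.symm]; omega
          · simp [h1, h2]
      rw [Finset.sum_congr rfl fun w _ => this w, Finset.sum_ite_eq' Finset.univ x]
      simp
    have hCr : t ≤ C' r := by
      have := hge r
      simpa [stack] using this
    have hle : t ≤ (∑ w, if w = r then C' w else C' w / 2) := by
      calc t ≤ C' r := hCr
      _ = (if r = r then C' r else C' r / 2) := by simp
      _ ≤ ∑ w, if w = r then C' w else C' w / 2 :=
          Finset.single_le_sum (f := fun w => if w = r then C' w else C' w / 2)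
            (fun w _ => Nat.zero_le _) (Finset.mem_univ r)
    omega
end

section
/- For m ≥ 5 and t ≥ 1, the t-fold pebbling number of the Kneser graph satisfies π_t(K(m, 2)) ≥ p(m, t), where p(m, t) = max( C(m,2) + 2t − 2, 4t + 2m − 5 ). -/
open Finset

section potential
variable {V : Type} [Fintype V] [DecidableEq V] {G : SimpleGraph V}

lemma phi_step (g : V → ℕ → ℕ)
    (hg : ∀ u v, G.Adj u v → ∀ c d : ℕ, 2 ≤ c → g u (c - 2) + g v (d + 1) ≤ g u c + g v d)
    {C C' : V → ℕ} (h : PebblingStep G C C') :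
    (∑ v, g v (C' v)) ≤ ∑ v, g v (C v) := by
  obtain ⟨u, v, hadj, hcu, rfl⟩ := h
  have hne : u ≠ v := hadj.ne
  have hv : v ∈ univ.erase u := Finset.mem_erase.2 ⟨hne.symm, mem_univ v⟩
  have key : ∀ D : V → ℕ, (∑ w, g w (D w)) =
      g u (D u) + (g v (D v) + ∑ w ∈ (univ.erase u).erase v, g w (D w)) := by
    intro D
    rw [← Finset.add_sum_erase _ (fun w => g w (D w)) (Finset.mem_univ u),
      ← Finset.add_sum_erase _ (fun w => g w (D w)) hv]
  rw [key, key]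
  have hrest : ∑ w ∈ (univ.erase u).erase v,
      g w (if w = u then C u - 2 else if w = v then C v + 1 else C w)
      = ∑ w ∈ (univ.erase u).erase v, g w (C w) := by
    apply Finset.sum_congr rfl
    intro w hw
    simp only [Finset.mem_erase] at hw
    simp [hw.1, hw.2.1]
  have hgu := hg u v hadj (C u) (C v) hcu
  simp only [hrest, if_true, eq_self_iff_true, if_neg hne.symm]
  omega

lemma phi_rtg (g : V → ℕ → ℕ)
    (hg : ∀ u v, G.Adj u v → ∀ c d : ℕ, 2 ≤ c → g u (c - 2) + g v (d + 1) ≤ g u c + g v d)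
    {C C' : V → ℕ} (h : Relation.ReflTransGen (PebblingStep G) C C') :
    (∑ v, g v (C' v)) ≤ ∑ v, g v (C v) := by
  induction h with
  | refl => exact le_refl _
  | tail _ hstep ih => exact le_trans (phi_step g hg hstep) ih

lemma unsolvable_of_phi (g : V → ℕ → ℕ)
    (hg : ∀ u v, G.Adj u v → ∀ c d : ℕ, 2 ≤ c → g u (c - 2) + g v (d + 1) ≤ g u c + g v d)
    (r : V) (t : ℕ) (hmono : ∀ a b : ℕ, a ≤ b → g r a ≤ g r b)
    {C : V → ℕ} (hΦ : (∑ v, g v (C v)) < g r t) : ¬ Solvable G C (stack r t) := by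
  rintro ⟨C', hrtg, hle⟩
  have h0 : t ≤ C' r := by simpa [stack] using hle r
  have h1 : g r t ≤ g r (C' r) := hmono _ _ h0
  have h2 : g r (C' r) ≤ ∑ v, g v (C' v) :=
    Finset.single_le_sum (f := fun v => g v (C' v)) (fun i _ => Nat.zero_le _) (mem_univ r)
  have h3 := phi_rtg g hg hrtg
  omega

lemma phi_eval (g : V → ℕ → ℕ) (hg0 : ∀ v, g v 0 = 0) (u : V) (S : Finset V) (hu : u ∉ S) (X : ℕ) :
    ∑ v, g v (X * (if v = u then 1 else 0) + (if v ∈ S then 1 else 0))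
      = g u X + ∑ v ∈ S, g v 1 := by
  rw [← Finset.sum_subset (Finset.subset_univ (insert u S))]
  · rw [Finset.sum_insert hu]
    congr 1
    · simp [hu]
    · apply Finset.sum_congr rfl
      intro v hv
      have : v ≠ u := fun h => hu (h ▸ hv)
      simp [this, hv]
  · intro v _ hv
    simp only [Finset.mem_insert, not_or] at hv
    simp [hv.1, hv.2, hg0]

lemma move_many {C : V → ℕ} {u v : V} (hadj : G.Adj u v) :
    ∀ k : ℕ, 2 * k ≤ C u →
    Relation.ReflTransGen (PebblingStep G) C
      (fun w => if w = u then C u - 2 * k else if w = v then C v + k else C w) := by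
  have hne : u ≠ v := hadj.ne
  intro k
  induction k with
  | zero =>
    intro _
    have : (fun w => if w = u then C u - 2 * 0 else if w = v then C v + 0 else C w) = C := by
      funext w
      by_cases h1 : w = u
      · subst h1; simp
      · by_cases h2 : w = v
        · subst h2; simp [hne.symm]
        · simp [h1, h2]
    rw [this]
  | succ k ih =>
    intro hk
    refine Relation.ReflTransGen.tail (ih (by omega)) ⟨u, v, hadj, ?_, ?_⟩
    · show 2 ≤ (if u = u then C u - 2 * k else if u = v then C v + k else C u)
      rw [if_pos rfl]; omega
    · funext w
      by_cases h1 : w = u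
      · subst h1
        simp only [if_true, eq_self_iff_true]
        omega
      · by_cases h2 : w = v
        · subst h2
          simp only [if_neg h1, if_true, eq_self_iff_true]
          omega
        · simp only [if_neg h1, if_neg h2]

lemma solvable_of_big {C : V → ℕ} {u r : V} {t : ℕ} (h4t : 4 * t ≤ C u)
    (hconn : u = r ∨ G.Adj u r ∨ (u ≠ r ∧ ∃ w, G.Adj u w ∧ G.Adj w r)) :
    Solvable G C (stack r t) := by
  rcases hconn with rfl | hadj | ⟨hne, w, huw, hwr⟩
  · exact ⟨C, Relation.ReflTransGen.refl, fun v => by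
      by_cases h : v = u <;> simp [stack, h] <;> omega⟩
  · refine ⟨_, move_many hadj t (by omega), fun v => ?_⟩
    by_cases h : v = r
    · subst h
      have hru : v ≠ u := hadj.ne'
      simp only [stack, if_pos rfl, if_neg hru, if_true, eq_self_iff_true]
      omega
    · simp [stack, h]
  · have hwu : w ≠ u := huw.ne'
    have hrw : r ≠ w := hwr.ne'
    set C₁ := fun x => if x = u then C u - 2 * (2 * t) else if x = w then C w + 2 * t else C x with hC₁
    have step1 : Relation.ReflTransGen (PebblingStep G) C C₁ := move_many huw (2 * t) (by omega)
    have hC₁w : 2 * t ≤ C₁ w := by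
      simp only [hC₁, if_neg hwu, if_true, eq_self_iff_true]
      omega
    refine ⟨_, Relation.ReflTransGen.trans step1 (move_many hwr t hC₁w), fun v => ?_⟩
    by_cases h : v = r
    · subst h
      simp only [stack, if_pos rfl, if_neg hrw, if_neg (Ne.symm hne), hC₁, if_true,
        eq_self_iff_true]
      omega
    · simp [stack, h]

end potential

section boundA
variable {V : Type} [Fintype V] [DecidableEq V] {G : SimpleGraph V}

lemma boundA (r u : V) (hur : u ≠ r) (t b : ℕ) (ht : 1 ≤ t)
    (hb : b ≤ Fintype.card V + 2 * t - 3) (hcard : 2 ≤ Fintype.card V)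
    (hsolv : ∀ C : V → ℕ, (∑ v, C v) = b → Solvable G C (stack r t)) : False := by
  classical
  set g : V → ℕ → ℕ := fun v x => if v = r then x else x / 2 with hgdef
  have hg : ∀ u' v', G.Adj u' v' → ∀ c d : ℕ, 2 ≤ c →
      g u' (c - 2) + g v' (d + 1) ≤ g u' c + g v' d := by
    intro u' v' hadj c d hc
    have hne := hadj.ne
    simp only [hgdef]
    by_cases h1 : u' = r
    · by_cases h2 : v' = r
      · exact absurd (h1.trans h2.symm) hne
      · simp only [if_pos h1, if_neg h2]; omega
    · by_cases h2 : v' = r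
      · simp only [if_neg h1, if_pos h2]; omega
      · simp only [if_neg h1, if_neg h2]; omega
  set X := min b (2 * t - 1) with hX
  set k := b - X with hk
  have hsub : ({r, u} : Finset V) ⊆ Finset.univ := Finset.subset_univ _
  have hcard2 : ({r, u} : Finset V).card = 2 := Finset.card_pair (Ne.symm hur)
  have hcompl : (Finset.univ \ {r, u}).card = Fintype.card V - 2 := by
    rw [Finset.card_sdiff_of_subset hsub, hcard2, Finset.card_univ]
  have hkle : k ≤ (Finset.univ \ {r, u}).card := by rw [hcompl]; omega
  obtain ⟨S, hSsub, hScard⟩ := Finset.exists_subset_card_eq hkle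
  have hSmem : ∀ v ∈ S, v ≠ r ∧ v ≠ u := by
    intro v hv
    have := hSsub hv
    simp only [Finset.mem_sdiff, Finset.mem_insert, Finset.mem_singleton] at this
    exact ⟨fun h => this.2 (Or.inl h), fun h => this.2 (Or.inr h)⟩
  have huS : u ∉ S := fun h => (hSmem u h).2 rfl
  set C : V → ℕ := fun v => X * (if v = u then 1 else 0) + (if v ∈ S then 1 else 0) with hC
  have hsize : (∑ v, C v) = b := by
    have := phi_eval (fun _ x => x) (fun _ => rfl) u S huS X
    simp only [hC]
    rw [this, Finset.sum_const, smul_eq_mul, mul_one, hScard]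
    omega
  have hΦ : (∑ v, g v (C v)) < g r t := by
    have heval := phi_eval g (by intro v; simp only [hgdef]; split_ifs <;> rfl) u S huS X
    simp only [hC]
    rw [heval]
    have h1 : g u X = X / 2 := by simp only [hgdef, if_neg hur]
    have h2 : (∑ v ∈ S, g v 1) = 0 := by
      apply Finset.sum_eq_zero
      intro v hv
      simp only [hgdef, if_neg (hSmem v hv).1]
      rfl
    have h3 : g r t = t := by simp only [hgdef, if_pos rfl]
    rw [h1, h2, h3]
    omega
  exact unsolvable_of_phi g hg r t
    (by intro x y hxy; simp only [hgdef, if_pos rfl]; exact hxy) hΦ (hsolv C hsize)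

end boundA

section kneserparts
variable {m : ℕ}

lemma kneser_adj_iff {u v : {s : Finset (Fin m) // s.card = 2}} :
    (kneserGraph m 2).Adj u v ↔ u ≠ v ∧ Disjoint u.1 v.1 := by
  rw [kneserGraph, SimpleGraph.fromRel_adj]
  constructor
  · rintro ⟨h1, h2 | h2⟩
    · exact ⟨h1, h2⟩
    · exact ⟨h1, h2.symm⟩
  · rintro ⟨h1, h2⟩
    exact ⟨h1, Or.inl h2⟩

lemma kneser_conn (hm : 5 ≤ m) (u r : {s : Finset (Fin m) // s.card = 2}) :
    u = r ∨ (kneserGraph m 2).Adj u r ∨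
      (u ≠ r ∧ ∃ w, (kneserGraph m 2).Adj u w ∧ (kneserGraph m 2).Adj w r) := by
  by_cases h1 : u = r
  · exact Or.inl h1
  by_cases h2 : Disjoint u.1 r.1
  · exact Or.inr (Or.inl (kneser_adj_iff.mpr ⟨h1, h2⟩))
  refine Or.inr (Or.inr ⟨h1, ?_⟩)
  have hinter : (u.1 ∩ r.1).Nonempty := Finset.not_disjoint_iff_nonempty_inter.mp h2
  have hunion : (u.1 ∪ r.1).card ≤ 3 := by
    have h4 := Finset.card_union_add_card_inter u.1 r.1
    have h5 : 1 ≤ (u.1 ∩ r.1).card := Finset.card_pos.mpr hinter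
    have h6 := u.2; have h7 := r.2
    omega
  have hcompl : 2 ≤ (Finset.univ \ (u.1 ∪ r.1)).card := by
    rw [Finset.card_sdiff_of_subset (Finset.subset_univ _), Finset.card_univ, Fintype.card_fin]
    omega
  obtain ⟨s, hssub, hscard⟩ := Finset.exists_subset_card_eq hcompl
  have hsdisj : ∀ x ∈ s, x ∉ u.1 ∧ x ∉ r.1 := by
    intro x hx
    have := hssub hx
    simp only [Finset.mem_sdiff, Finset.mem_union] at this
    exact ⟨fun h => this.2 (Or.inl h), fun h => this.2 (Or.inr h)⟩
  set w : {s : Finset (Fin m) // s.card = 2} := ⟨s, hscard⟩ with hw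
  have hdu : Disjoint u.1 s := Finset.disjoint_left.mpr (fun {x} hx hxs => (hsdisj x hxs).1 hx)
  have hdr : Disjoint s r.1 := Finset.disjoint_left.mpr (fun {x} hx hxr => (hsdisj x hx).2 hxr)
  have hwu : u ≠ w := by
    intro h
    obtain ⟨x, hx⟩ := Finset.card_pos.mp (by rw [hscard]; omega : 0 < s.card)
    exact (hsdisj x hx).1 (by rw [h]; exact hx)
  have hwr : w ≠ r := by
    intro h
    obtain ⟨x, hx⟩ := Finset.card_pos.mp (by rw [hscard]; omega : 0 < s.card)
    exact (hsdisj x hx).2 (by rw [← h]; exact hx)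
  exact ⟨w, kneser_adj_iff.mpr ⟨hwu, hdu⟩, kneser_adj_iff.mpr ⟨hwr, hdr⟩⟩

lemma kneser_nonempty (hm : 5 ≤ m) (t : ℕ) (r : {s : Finset (Fin m) // s.card = 2}) :
    ∃ N, ∀ C : {s : Finset (Fin m) // s.card = 2} → ℕ,
      (∑ v, C v) = N → Solvable (kneserGraph m 2) C (stack r t) := by
  set n := Fintype.card {s : Finset (Fin m) // s.card = 2} with hn
  refine ⟨n * (4 * t) + 1, fun C hC => ?_⟩
  have hbig : ∃ u, 4 * t ≤ C u := by
    by_contra h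
    push_neg at h
    have hle : ∀ u ∈ Finset.univ, C u ≤ 4 * t - 1 := fun u _ => by have := h u; omega
    have h1 := Finset.sum_le_sum hle
    rw [Finset.sum_const, smul_eq_mul, Finset.card_univ, ← hn] at h1
    have h2 : n * (4 * t - 1) ≤ n * (4 * t) := Nat.mul_le_mul_left n (by omega)
    omega
  obtain ⟨u, hu⟩ := hbig
  exact solvable_of_big hu (kneser_conn hm u r)

end kneserparts

section boundB

def kpair {m : ℕ} (x y : Fin m) (h : x.val ≠ y.val) : {s : Finset (Fin m) // s.card = 2} :=
  ⟨{x, y}, Finset.card_pair (fun he => h (congrArg Fin.val he))⟩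

def FF {m : ℕ} (hm : 5 ≤ m) (a0 a1 : Fin m) (h0 : a0.val = 0) (h1 : a1.val = 1) (i : ℕ) :
    {s : Finset (Fin m) // s.card = 2} :=
  if hi1 : i < m - 2 then kpair a1 ⟨i + 2, by omega⟩ (by show a1.val ≠ i + 2; omega)
  else if hi2 : i < 2 * m - 5 then
    kpair a0 ⟨i + 5 - m, by omega⟩ (by show a0.val ≠ i + 5 - m; omega)
  else kpair a0 a1 (by omega)

lemma FF_spec {m : ℕ} (hm : 5 ≤ m) (a0 a1 : Fin m) (h0 : a0.val = 0) (h1 : a1.val = 1)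
    {i : ℕ} (hi : i < 2 * m - 5) (x : Fin m) :
    x ∈ (FF hm a0 a1 h0 h1 i).1 ↔
      (x.val = (if i < m - 2 then 1 else 0) ∨ x.val = (if i < m - 2 then i + 2 else i + 5 - m)) := by
  by_cases hi1 : i < m - 2
  · rw [FF, dif_pos hi1]
    simp only [kpair, Finset.mem_insert, Finset.mem_singleton, if_pos hi1, Fin.ext_iff, h1]
  · rw [FF, dif_neg hi1, dif_pos hi]
    simp only [kpair, Finset.mem_insert, Finset.mem_singleton, if_neg hi1, Fin.ext_iff, h0]

set_option maxHeartbeats 1000000 in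
lemma boundB {m t : ℕ} (hm : 5 ≤ m) (ht : 1 ≤ t) (b : ℕ) (hb : b ≤ 4 * t + 2 * m - 6)
    (r₀ u₀ : {s : Finset (Fin m) // s.card = 2}) (a0 a1 a2 : Fin m)
    (h0 : a0.val = 0) (h1 : a1.val = 1) (h2 : a2.val = 2)
    (hr₀ : r₀.1 = {a0, a1}) (hu₀ : u₀.1 = {a0, a2})
    (hsolv : ∀ C : {s : Finset (Fin m) // s.card = 2} → ℕ,
      (∑ v, C v) = b → Solvable (kneserGraph m 2) C (stack r₀ t)) : False := by
  classical
  have hpe : ∀ x p q : Fin m, x ∈ ({p, q} : Finset (Fin m)) → x = p ∨ x = q := by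
    intro x p q hx
    simpa [Finset.mem_insert, Finset.mem_singleton] using hx
  have hnm : ∀ x p q : Fin m, x.val ≠ p.val → x.val ≠ q.val →
      x ∉ ({p, q} : Finset (Fin m)) := by
    intro x p q hp hq hx
    rcases hpe x p q hx with h | h
    · exact hp (congrArg Fin.val h)
    · exact hq (congrArg Fin.val h)
  set g : {s : Finset (Fin m) // s.card = 2} → ℕ → ℕ := fun v x =>
    if v = r₀ then 4 * x else if Disjoint v.1 r₀.1 then 2 * x else 2 * (x / 2) with hgdef
  have hg : ∀ u' v', (kneserGraph m 2).Adj u' v' → ∀ c d : ℕ, 2 ≤ c →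
      g u' (c - 2) + g v' (d + 1) ≤ g u' c + g v' d := by
    intro u' v' hadj c d hc
    obtain ⟨hne, hd⟩ := kneser_adj_iff.mp hadj
    simp only [hgdef]
    by_cases hu1 : u' = r₀
    · by_cases hv1 : v' = r₀
      · exact absurd (hu1.trans hv1.symm) hne
      · simp only [if_pos hu1, if_neg hv1]
        by_cases hv2 : Disjoint v'.1 r₀.1
        · simp only [if_pos hv2]; omega
        · simp only [if_neg hv2]; omega
    · by_cases hv1 : v' = r₀
      · have hdu : Disjoint u'.1 r₀.1 := by rw [← hv1]; exact hd
        simp only [if_neg hu1, if_pos hv1, if_pos hdu]; omega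
      · by_cases hu2 : Disjoint u'.1 r₀.1 <;> by_cases hv2 : Disjoint v'.1 r₀.1
        · simp only [if_neg hu1, if_neg hv1, if_pos hu2, if_pos hv2]; omega
        · simp only [if_neg hu1, if_neg hv1, if_pos hu2, if_neg hv2]; omega
        · simp only [if_neg hu1, if_neg hv1, if_neg hu2, if_pos hv2]; omega
        · simp only [if_neg hu1, if_neg hv1, if_neg hu2, if_neg hv2]; omega
  set X := min b (4 * t - 1) with hX
  set k := b - X with hk
  have hkle : k ≤ 2 * m - 5 := by omega
  set F : ℕ → {s : Finset (Fin m) // s.card = 2} := FF hm a0 a1 h0 h1 with hFdef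
  have hF : ∀ i, i < 2 * m - 5 → F i ≠ r₀ ∧ F i ≠ u₀ ∧ ¬ Disjoint (F i).1 r₀.1 := by
    intro i hi
    by_cases hi1 : i < m - 2
    · have hmem2 : ∀ x : Fin m, x ∈ (F i).1 ↔ (x.val = 1 ∨ x.val = i + 2) := by
        intro x
        have hs := FF_spec hm a0 a1 h0 h1 hi x
        rw [if_pos hi1, if_pos hi1] at hs
        exact hs
      refine ⟨?_, ?_, ?_⟩
      · intro h
        have hx : (⟨i + 2, by omega⟩ : Fin m) ∈ (F i).1 := (hmem2 _).mpr (Or.inr rfl)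
        rw [h, hr₀] at hx
        exact hnm _ _ _ (show i + 2 ≠ a0.val by omega) (show i + 2 ≠ a1.val by omega) hx
      · intro h
        have hx : a1 ∈ (F i).1 := (hmem2 a1).mpr (Or.inl h1)
        rw [h, hu₀] at hx
        exact hnm _ _ _ (by omega) (by omega) hx
      · rw [Finset.not_disjoint_iff_nonempty_inter]
        exact ⟨a1, Finset.mem_inter.mpr ⟨(hmem2 a1).mpr (Or.inl h1), by rw [hr₀]; simp⟩⟩
    · have hmem2 : ∀ x : Fin m, x ∈ (F i).1 ↔ (x.val = 0 ∨ x.val = i + 5 - m) := by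
        intro x
        have hs := FF_spec hm a0 a1 h0 h1 hi x
        rw [if_neg hi1, if_neg hi1] at hs
        exact hs
      refine ⟨?_, ?_, ?_⟩
      · intro h
        have hx : (⟨i + 5 - m, by omega⟩ : Fin m) ∈ (F i).1 := (hmem2 _).mpr (Or.inr rfl)
        rw [h, hr₀] at hx
        exact hnm _ _ _ (show i + 5 - m ≠ a0.val by omega) (show i + 5 - m ≠ a1.val by omega) hx
      · intro h
        have hx : (⟨i + 5 - m, by omega⟩ : Fin m) ∈ (F i).1 := (hmem2 _).mpr (Or.inr rfl)
        rw [h, hu₀] at hx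
        exact hnm _ _ _ (show i + 5 - m ≠ a0.val by omega) (show i + 5 - m ≠ a2.val by omega) hx
      · rw [Finset.not_disjoint_iff_nonempty_inter]
        exact ⟨a0, Finset.mem_inter.mpr ⟨(hmem2 a0).mpr (Or.inl h0), by rw [hr₀]; simp⟩⟩
  have hinj : ∀ i < 2 * m - 5, ∀ j < 2 * m - 5, F i = F j → i = j := by
    intro i hi j hj h
    by_cases hi1 : i < m - 2 <;> by_cases hj1 : j < m - 2
    · have hx : (⟨i + 2, by omega⟩ : Fin m) ∈ (F i).1 :=
        (FF_spec hm a0 a1 h0 h1 hi _).mpr (Or.inr (by rw [if_pos hi1]))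
      rw [h] at hx
      have hv := (FF_spec hm a0 a1 h0 h1 hj _).mp hx
      rw [if_pos hj1, if_pos hj1] at hv
      rcases hv with hv | hv
      · have hv2 : i + 2 = 1 := hv
        omega
      · have hv2 : i + 2 = j + 2 := hv
        omega
    · have hx : a1 ∈ (F i).1 :=
        (FF_spec hm a0 a1 h0 h1 hi a1).mpr (Or.inl (by rw [if_pos hi1]; exact h1))
      rw [h] at hx
      have hv := (FF_spec hm a0 a1 h0 h1 hj a1).mp hx
      rw [if_neg hj1, if_neg hj1] at hv
      rcases hv with hv | hv <;> omega
    · have hx : a1 ∈ (F j).1 :=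
        (FF_spec hm a0 a1 h0 h1 hj a1).mpr (Or.inl (by rw [if_pos hj1]; exact h1))
      rw [← h] at hx
      have hv := (FF_spec hm a0 a1 h0 h1 hi a1).mp hx
      rw [if_neg hi1, if_neg hi1] at hv
      rcases hv with hv | hv <;> omega
    · have hx : (⟨i + 5 - m, by omega⟩ : Fin m) ∈ (F i).1 :=
        (FF_spec hm a0 a1 h0 h1 hi _).mpr (Or.inr (by rw [if_neg hi1]))
      rw [h] at hx
      have hv := (FF_spec hm a0 a1 h0 h1 hj _).mp hx
      rw [if_neg hj1, if_neg hj1] at hv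
      rcases hv with hv | hv
      · have hv2 : i + 5 - m = 0 := hv
        omega
      · have hv2 : i + 5 - m = j + 5 - m := hv
        omega
  set S := (Finset.range k).image F with hSdef
  have hScard : S.card = k := by
    rw [hSdef, Finset.card_image_of_injOn, Finset.card_range]
    intro i hi j hj hij
    rw [Finset.coe_range, Set.mem_Iio] at hi hj
    exact hinj i (by omega) j (by omega) hij
  have hSmem : ∀ v ∈ S, v ≠ r₀ ∧ v ≠ u₀ ∧ ¬ Disjoint v.1 r₀.1 := by
    intro v hv
    rw [hSdef, Finset.mem_image] at hv
    obtain ⟨i, hik, rfl⟩ := hv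
    rw [Finset.mem_range] at hik
    exact hF i (by omega)
  have huS : u₀ ∉ S := fun h => (hSmem u₀ h).2.1 rfl
  have hu₀r : u₀ ≠ r₀ := by
    intro h
    have h' : u₀.1 = r₀.1 := congrArg Subtype.val h
    rw [hu₀, hr₀] at h'
    have hmem : a2 ∈ ({a0, a1} : Finset (Fin m)) := by rw [← h']; simp
    exact hnm _ _ _ (by omega) (by omega) hmem
  have hu₀d : ¬ Disjoint u₀.1 r₀.1 := by
    rw [Finset.not_disjoint_iff_nonempty_inter]
    exact ⟨a0, Finset.mem_inter.mpr ⟨by rw [hu₀]; simp, by rw [hr₀]; simp⟩⟩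
  set C : {s : Finset (Fin m) // s.card = 2} → ℕ :=
    fun v => X * (if v = u₀ then 1 else 0) + (if v ∈ S then 1 else 0) with hC
  have hg0 : ∀ v, g v 0 = 0 := by
    intro v; simp only [hgdef]; split_ifs <;> rfl
  have hsize : (∑ v, C v) = b := by
    have heval := phi_eval (fun _ x => x) (fun _ => rfl) u₀ S huS X
    simp only [hC]
    rw [heval, Finset.sum_const, smul_eq_mul, mul_one, hScard]
    omega
  have hΦ : (∑ v, g v (C v)) < g r₀ t := by
    have heval := phi_eval g hg0 u₀ S huS X
    simp only [hC]
    rw [heval]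
    have hgu : g u₀ X = 2 * (X / 2) := by simp only [hgdef, if_neg hu₀r, if_neg hu₀d]
    have hsum0 : (∑ v ∈ S, g v 1) = 0 := by
      apply Finset.sum_eq_zero
      intro v hv
      simp only [hgdef, if_neg (hSmem v hv).1, if_neg (hSmem v hv).2.2]
      rfl
    have hgr : g r₀ t = 4 * t := by simp only [hgdef, if_pos rfl]
    rw [hgu, hsum0, hgr]
    omega
  exact unsolvable_of_phi g hg r₀ t
    (by intro x y hxy; simp only [hgdef, if_pos rfl]; omega) hΦ (hsolv C hsize)

end boundB

theorem kneser_lower_bound (m t : ℕ) (hm : 5 ≤ m) (ht : 1 ≤ t) :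
    max (m.choose 2 + 2 * t - 2) (4 * t + 2 * m - 5) ≤ tPebblingNumber (kneserGraph m 2) t := by
  classical
  set a0 : Fin m := ⟨0, by omega⟩ with ha0
  set a1 : Fin m := ⟨1, by omega⟩ with ha1
  set a2 : Fin m := ⟨2, by omega⟩ with ha2
  have h0 : a0.val = 0 := rfl
  have h1 : a1.val = 1 := rfl
  have h2 : a2.val = 2 := rfl
  have hne01 : a0 ≠ a1 := fun h => by
    have hv : a0.val = a1.val := congrArg Fin.val h
    omega
  have hne02 : a0 ≠ a2 := fun h => by
    have hv : a0.val = a2.val := congrArg Fin.val h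
    omega
  set r₀ : {s : Finset (Fin m) // s.card = 2} := ⟨{a0, a1}, Finset.card_pair hne01⟩ with hr₀def
  set u₀ : {s : Finset (Fin m) // s.card = 2} := ⟨{a0, a2}, Finset.card_pair hne02⟩ with hu₀def
  rw [tPebblingNumber]
  refine le_trans ?_ (Finset.le_sup (Finset.mem_univ r₀))
  show max (m.choose 2 + 2 * t - 2) (4 * t + 2 * m - 5) ≤
    pebblingNumber (kneserGraph m 2) (stack r₀ t)
  rw [pebblingNumber]
  obtain ⟨N, hN⟩ := kneser_nonempty hm t r₀
  refine le_csInf ⟨N, hN⟩ ?_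
  intro b hb
  simp only [Set.mem_setOf_eq] at hb
  have hcV : Fintype.card {s : Finset (Fin m) // s.card = 2} = m.choose 2 := by
    rw [Fintype.card_finset_len, Fintype.card_fin]
  have hch : (5:ℕ).choose 2 ≤ m.choose 2 := Nat.choose_le_choose 2 hm
  have h52 : (5:ℕ).choose 2 = 10 := by decide
  rw [max_le_iff]
  constructor
  · by_contra hA
    push_neg at hA
    have hu₀r : u₀ ≠ r₀ := by
      intro h
      have h' : u₀.1 = r₀.1 := congrArg Subtype.val h
      have hmem : a2 ∈ ({a0, a1} : Finset (Fin m)) := by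
        rw [show ({a0, a1} : Finset (Fin m)) = u₀.1 from h'.symm ▸ rfl]
        show a2 ∈ ({a0, a2} : Finset (Fin m))
        simp
      simp only [Finset.mem_insert, Finset.mem_singleton] at hmem
      rcases hmem with h'' | h''
      · have hv : a2.val = a0.val := congrArg Fin.val h''
        omega
      · have hv : a2.val = a1.val := congrArg Fin.val h''
        omega
    exact boundA r₀ u₀ hu₀r t b ht (by omega) (by omega) hb
  · by_contra hB
    push_neg at hB
    exact boundB hm ht b (by omega) r₀ u₀ a0 a1 a2 h0 h1 h2 rfl rfl hb
end

section
/- Let r be a vertex of the Petersen graph G = K(5, 2). Every configuration C on G of size at least 13 has an r-solution of cost at most 4 (i.e., a cheap r-solution, since ecc(r) = 2 and 2^{ecc(r)} = 4). -/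
section PetersenAux
variable {V : Type} [DecidableEq V] {G : SimpleGraph V} {C : V → ℕ}

lemma cheap0 {r : V} (h : 1 ≤ C r) : CheaplySolvable G C r 4 :=
  ⟨0, C, .refl C, h, by norm_num⟩

lemma cheap1 {u r : V} (hadj : G.Adj u r) (h : 2 ≤ C u) : CheaplySolvable G C r 4 := by
  refine ⟨1, _, .tail (.refl C) ⟨u, r, hadj, h, rfl⟩, ?_, by norm_num⟩
  have h1 : r ≠ u := (G.ne_of_adj hadj).symm
  simp [h1]

lemma cheap2 {w n r : V} (hwn : G.Adj w n) (hnr : G.Adj n r)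
    (hw : 2 ≤ C w) (hn : 1 ≤ C n) : CheaplySolvable G C r 4 := by
  set C1 : V → ℕ := fun x => if x = w then C w - 2 else if x = n then C n + 1 else C x with hC1
  have hnw : n ≠ w := (G.ne_of_adj hwn).symm
  have h1 : 2 ≤ C1 n := by simp [hC1, hnw]; omega
  refine ⟨2, _, .tail (.tail (.refl C) ⟨w, n, hwn, hw, rfl⟩) ⟨n, r, hnr, h1, rfl⟩, ?_, by norm_num⟩
  have hrn : r ≠ n := (G.ne_of_adj hnr).symm
  simp [hrn]

lemma cheap3a {w n r : V} (hwn : G.Adj w n) (hnr : G.Adj n r)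
    (hw : 4 ≤ C w) : CheaplySolvable G C r 4 := by
  set C1 : V → ℕ := fun x => if x = w then C w - 2 else if x = n then C n + 1 else C x with hC1
  have hnw : n ≠ w := (G.ne_of_adj hwn).symm
  have h1 : 2 ≤ C1 w := by simp [hC1]; omega
  set C2 : V → ℕ := fun x => if x = w then C1 w - 2 else if x = n then C1 n + 1 else C1 x with hC2
  have h2 : 2 ≤ C2 n := by simp [hC2, hC1, hnw]
  refine ⟨3, _, .tail (.tail (.tail (.refl C) ⟨w, n, hwn, le_trans (by norm_num) hw, rfl⟩)
    ⟨w, n, hwn, h1, rfl⟩) ⟨n, r, hnr, h2, rfl⟩, ?_, by norm_num⟩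
  have hrn : r ≠ n := (G.ne_of_adj hnr).symm
  simp [hrn]

lemma cheap3b {x y n r : V} (hxy : x ≠ y) (hxn : G.Adj x n) (hyn : G.Adj y n) (hnr : G.Adj n r)
    (hx : 2 ≤ C x) (hy : 2 ≤ C y) : CheaplySolvable G C r 4 := by
  set C1 : V → ℕ := fun z => if z = x then C x - 2 else if z = n then C n + 1 else C z with hC1
  have hnx : n ≠ x := (G.ne_of_adj hxn).symm
  have hny : n ≠ y := (G.ne_of_adj hyn).symm
  have h1 : 2 ≤ C1 y := by simp [hC1, hxy.symm, hny.symm]; omega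
  set C2 : V → ℕ := fun z => if z = y then C1 y - 2 else if z = n then C1 n + 1 else C1 z with hC2
  have h2 : 2 ≤ C2 n := by simp [hC2, hC1, hnx, hny]
  refine ⟨3, _, .tail (.tail (.tail (.refl C) ⟨x, n, hxn, hx, rfl⟩)
    ⟨y, n, hyn, h1, rfl⟩) ⟨n, r, hnr, h2, rfl⟩, ?_, by norm_num⟩
  have hrn : r ≠ n := (G.ne_of_adj hnr).symm
  simp [hrn]

lemma branchBound {n a b r : V} (hc : ¬ CheaplySolvable G C r 4)
    (hnr : G.Adj n r) (han : G.Adj a n) (hbn : G.Adj b n) (hab : a ≠ b) :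
    C n + C a + C b ≤ 4 := by
  have h1 : C n ≤ 1 := by by_contra h; exact hc (cheap1 hnr (by omega))
  have h2 : 1 ≤ C n → C a ≤ 1 := by intro hn; by_contra h; exact hc (cheap2 han hnr (by omega) hn)
  have h3 : 1 ≤ C n → C b ≤ 1 := by intro hn; by_contra h; exact hc (cheap2 hbn hnr (by omega) hn)
  have h4 : C a ≤ 3 := by by_contra h; exact hc (cheap3a han hnr (by omega))
  have h5 : C b ≤ 3 := by by_contra h; exact hc (cheap3a hbn hnr (by omega))
  have h6 : C a ≤ 1 ∨ C b ≤ 1 := by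
    by_contra h; push_neg at h; exact hc (cheap3b hab han hbn hnr (by omega) (by omega))
  omega

lemma key {r n1 a1 b1 n2 a2 b2 n3 a3 b3 : V}
    (h1 : G.Adj n1 r) (h2 : G.Adj a1 n1) (h3 : G.Adj b1 n1) (h4 : a1 ≠ b1)
    (h5 : G.Adj n2 r) (h6 : G.Adj a2 n2) (h7 : G.Adj b2 n2) (h8 : a2 ≠ b2)
    (h9 : G.Adj n3 r) (h10 : G.Adj a3 n3) (h11 : G.Adj b3 n3) (h12 : a3 ≠ b3)
    (h13 : 13 ≤ C r + C n1 + C a1 + C b1 + C n2 + C a2 + C b2 + C n3 + C a3 + C b3) :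
    CheaplySolvable G C r 4 := by
  by_contra hc
  have h0 : C r = 0 := by by_contra h; exact hc (cheap0 (by omega))
  have B1 := branchBound hc h1 h2 h3 h4
  have B2 := branchBound hc h5 h6 h7 h8
  have B3 := branchBound hc h9 h10 h11 h12
  omega

end PetersenAux

/-- Shorthand for the vertex `{i, j}` of the Petersen graph. -/
def pv (i j : Fin 5) : {s : Finset (Fin 5) // s.card = 2} :=
  if h : ({i,j} : Finset (Fin 5)).card = 2 then ⟨{i,j}, h⟩ else ⟨{0,1}, by decide⟩

lemma pv_adj (a b c d : Fin 5)
    (h1 : pv a b ≠ pv c d)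
    (h2 : Disjoint (pv a b).1 (pv c d).1) :
    (kneserGraph 5 2).Adj (pv a b) (pv c d) := ⟨h1, Or.inl h2⟩


theorem petersen_cheap (r : {s : Finset (Fin 5) // s.card = 2})
    (C : {s : Finset (Fin 5) // s.card = 2} → ℕ)
    (hsize : 13 ≤ ∑ v, C v) :
    CheaplySolvable (kneserGraph 5 2) C r 4 := by
  have hsum : ∑ v, C v = C (pv 0 1) + C (pv 0 2) + C (pv 0 3) + C (pv 0 4) + C (pv 1 2) + C (pv 1 3) + C (pv 1 4) + C (pv 2 3) + C (pv 2 4) + C (pv 3 4) := by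
    rw [show (Finset.univ : Finset {s : Finset (Fin 5) // s.card = 2}) =
      {pv 0 1, pv 0 2, pv 0 3, pv 0 4, pv 1 2, pv 1 3, pv 1 4, pv 2 3, pv 2 4, pv 3 4} from by decide]
    rw [Finset.sum_insert (by decide), Finset.sum_insert (by decide), Finset.sum_insert (by decide),
        Finset.sum_insert (by decide), Finset.sum_insert (by decide), Finset.sum_insert (by decide),
        Finset.sum_insert (by decide), Finset.sum_insert (by decide), Finset.sum_insert (by decide),
        Finset.sum_singleton]
    ring
  have hr := (by decide : ∀ x : {s : Finset (Fin 5) // s.card = 2}, x = pv 0 1 ∨ x = pv 0 2 ∨ x = pv 0 3 ∨ x = pv 0 4 ∨ x = pv 1 2 ∨ x = pv 1 3 ∨ x = pv 1 4 ∨ x = pv 2 3 ∨ x = pv 2 4 ∨ x = pv 3 4) r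
  rcases hr with rfl | rfl | rfl | rfl | rfl | rfl | rfl | rfl | rfl | rfl
  · exact key (pv_adj 2 3 0 1 (by decide) (by decide)) (pv_adj 0 4 2 3 (by decide) (by decide)) (pv_adj 1 4 2 3 (by decide) (by decide)) (by decide) (pv_adj 2 4 0 1 (by decide) (by decide)) (pv_adj 0 3 2 4 (by decide) (by decide)) (pv_adj 1 3 2 4 (by decide) (by decide)) (by decide) (pv_adj 3 4 0 1 (by decide) (by decide)) (pv_adj 0 2 3 4 (by decide) (by decide)) (pv_adj 1 2 3 4 (by decide) (by decide)) (by decide) (by omega)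
  · exact key (pv_adj 1 3 0 2 (by decide) (by decide)) (pv_adj 0 4 1 3 (by decide) (by decide)) (pv_adj 2 4 1 3 (by decide) (by decide)) (by decide) (pv_adj 1 4 0 2 (by decide) (by decide)) (pv_adj 0 3 1 4 (by decide) (by decide)) (pv_adj 2 3 1 4 (by decide) (by decide)) (by decide) (pv_adj 3 4 0 2 (by decide) (by decide)) (pv_adj 0 1 3 4 (by decide) (by decide)) (pv_adj 1 2 3 4 (by decide) (by decide)) (by decide) (by omega)
  · exact key (pv_adj 1 2 0 3 (by decide) (by decide)) (pv_adj 0 4 1 2 (by decide) (by decide)) (pv_adj 3 4 1 2 (by decide) (by decide)) (by decide) (pv_adj 1 4 0 3 (by decide) (by decide)) (pv_adj 0 2 1 4 (by decide) (by decide)) (pv_adj 2 3 1 4 (by decide) (by decide)) (by decide) (pv_adj 2 4 0 3 (by decide) (by decide)) (pv_adj 0 1 2 4 (by decide) (by decide)) (pv_adj 1 3 2 4 (by decide) (by decide)) (by decide) (by omega)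
  · exact key (pv_adj 1 2 0 4 (by decide) (by decide)) (pv_adj 0 3 1 2 (by decide) (by decide)) (pv_adj 3 4 1 2 (by decide) (by decide)) (by decide) (pv_adj 1 3 0 4 (by decide) (by decide)) (pv_adj 0 2 1 3 (by decide) (by decide)) (pv_adj 2 4 1 3 (by decide) (by decide)) (by decide) (pv_adj 2 3 0 4 (by decide) (by decide)) (pv_adj 0 1 2 3 (by decide) (by decide)) (pv_adj 1 4 2 3 (by decide) (by decide)) (by decide) (by omega)
  · exact key (pv_adj 0 3 1 2 (by decide) (by decide)) (pv_adj 1 4 0 3 (by decide) (by decide)) (pv_adj 2 4 0 3 (by decide) (by decide)) (by decide) (pv_adj 0 4 1 2 (by decide) (by decide)) (pv_adj 1 3 0 4 (by decide) (by decide)) (pv_adj 2 3 0 4 (by decide) (by decide)) (by decide) (pv_adj 3 4 1 2 (by decide) (by decide)) (pv_adj 0 1 3 4 (by decide) (by decide)) (pv_adj 0 2 3 4 (by decide) (by decide)) (by decide) (by omega)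
  · exact key (pv_adj 0 2 1 3 (by decide) (by decide)) (pv_adj 1 4 0 2 (by decide) (by decide)) (pv_adj 3 4 0 2 (by decide) (by decide)) (by decide) (pv_adj 0 4 1 3 (by decide) (by decide)) (pv_adj 1 2 0 4 (by decide) (by decide)) (pv_adj 2 3 0 4 (by decide) (by decide)) (by decide) (pv_adj 2 4 1 3 (by decide) (by decide)) (pv_adj 0 1 2 4 (by decide) (by decide)) (pv_adj 0 3 2 4 (by decide) (by decide)) (by decide) (by omega)
  · exact key (pv_adj 0 2 1 4 (by decide) (by decide)) (pv_adj 1 3 0 2 (by decide) (by decide)) (pv_adj 3 4 0 2 (by decide) (by decide)) (by decide) (pv_adj 0 3 1 4 (by decide) (by decide)) (pv_adj 1 2 0 3 (by decide) (by decide)) (pv_adj 2 4 0 3 (by decide) (by decide)) (by decide) (pv_adj 2 3 1 4 (by decide) (by decide)) (pv_adj 0 1 2 3 (by decide) (by decide)) (pv_adj 0 4 2 3 (by decide) (by decide)) (by decide) (by omega)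
  · exact key (pv_adj 0 1 2 3 (by decide) (by decide)) (pv_adj 2 4 0 1 (by decide) (by decide)) (pv_adj 3 4 0 1 (by decide) (by decide)) (by decide) (pv_adj 0 4 2 3 (by decide) (by decide)) (pv_adj 1 2 0 4 (by decide) (by decide)) (pv_adj 1 3 0 4 (by decide) (by decide)) (by decide) (pv_adj 1 4 2 3 (by decide) (by decide)) (pv_adj 0 2 1 4 (by decide) (by decide)) (pv_adj 0 3 1 4 (by decide) (by decide)) (by decide) (by omega)
  · exact key (pv_adj 0 1 2 4 (by decide) (by decide)) (pv_adj 2 3 0 1 (by decide) (by decide)) (pv_adj 3 4 0 1 (by decide) (by decide)) (by decide) (pv_adj 0 3 2 4 (by decide) (by decide)) (pv_adj 1 2 0 3 (by decide) (by decide)) (pv_adj 1 4 0 3 (by decide) (by decide)) (by decide) (pv_adj 1 3 2 4 (by decide) (by decide)) (pv_adj 0 2 1 3 (by decide) (by decide)) (pv_adj 0 4 1 3 (by decide) (by decide)) (by decide) (by omega)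
  · exact key (pv_adj 0 1 3 4 (by decide) (by decide)) (pv_adj 2 3 0 1 (by decide) (by decide)) (pv_adj 2 4 0 1 (by decide) (by decide)) (by decide) (pv_adj 0 2 3 4 (by decide) (by decide)) (pv_adj 1 3 0 2 (by decide) (by decide)) (pv_adj 1 4 0 2 (by decide) (by decide)) (by decide) (pv_adj 1 2 3 4 (by decide) (by decide)) (pv_adj 0 3 1 2 (by decide) (by decide)) (pv_adj 0 4 1 2 (by decide) (by decide)) (by decide) (by omega)
end
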